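/- arXiv:2405.00148 — 6 statements merged into one kernel-verified Lean document; each statement's English description precedes it below -/
import Mathlib

section
/- Assume that every matrix E_{i,t} has full column rank. Then for every feasible pair ((Ψ_i)_i,(X_i)_i) of the local problem P_L there exists a feasible pair ((ψ_i)_i,(X_i)_i) of the state-feedback local problem P_L^x, with the same state-forecast sets X_i, whose closed-loop state-input trajectories coincide with those of ((Ψ_i)_i,(X_i)_i) for every ξ_i ∈ Ξ_i and ζ_{N_i} ∈ X_{N_i}, so that the two pairs achieve the same objective value; consequently val(P_L^x) = val(P_L). -/
open scoped BigOperators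

/-- The `q`-norm used in the cost: `q = 1` (when `qOne = true`) gives the sum of absolute
values, `q = ∞` (when `qOne = false`) gives the sup norm. -/
noncomputable def normQ (qOne : Bool) {n : ℕ} (v : Fin n → ℝ) : ℝ :=
  if qOne then ∑ k, |v k| else ‖v‖

/-- The data of a network of `M` interconnected linear systems over `T` stages:
dynamics matrices, operational constraints, costs, polyhedral uncertainty sets (nonempty and
compact), the neighbour sets `Nbr` and the precedent sets `Nbar` (characterized as the
smallest family containing each agent and nested along the neighbour relation). -/
structure Sys where
  M : ℕ
  T : ℕ
  hM : 1 ≤ M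
  hT : 1 ≤ T
  nx : Fin M → ℕ
  nu : Fin M → ℕ
  nξ : Fin M → ℕ
  xinit : ∀ i : Fin M, Fin (nx i) → ℝ
  Nbr : Fin M → Finset (Fin M)
  Nbar : Fin M → Finset (Fin M)
  Nbar_self : ∀ i, i ∈ Nbar i
  Nbar_nested : ∀ i, ∀ j ∈ Nbr i, Nbar j ⊆ Nbar i
  Nbar_min : ∀ P : Fin M → Finset (Fin M),
    (∀ i, i ∈ P i) → (∀ i, ∀ j ∈ Nbr i, P j ⊆ P i) → ∀ i, Nbar i ⊆ P i
  A : ∀ i : Fin M, Fin T → Matrix (Fin (nx i)) (Fin (nx i)) ℝ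
  B : ∀ i : Fin M, Fin T → ∀ j : Fin M, Matrix (Fin (nx i)) (Fin (nx j)) ℝ
  D : ∀ i : Fin M, Fin T → Matrix (Fin (nx i)) (Fin (nu i)) ℝ
  E : ∀ i : Fin M, Fin T → Matrix (Fin (nx i)) (Fin (nξ i)) ℝ
  nc : Fin M → ℕ
  Hx : ∀ i : Fin M, Matrix (Fin (nc i)) (Fin (T+1) × Fin (nx i)) ℝ
  Hu : ∀ i : Fin M, Matrix (Fin (nc i)) (Fin T × Fin (nu i)) ℝ
  hvec : ∀ i : Fin M, Fin (nc i) → ℝ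
  qOne : Bool
  nq : Fin M → ℕ
  nr : Fin M → ℕ
  Q : ∀ i : Fin M, Matrix (Fin (nq i)) (Fin (nx i)) ℝ
  R : ∀ i : Fin M, Matrix (Fin (nr i)) (Fin (nu i)) ℝ
  nW : Fin M → ℕ
  W : ∀ i : Fin M, Matrix (Fin (nW i)) (Fin T × Fin (nξ i)) ℝ
  wvec : ∀ i : Fin M, Fin (nW i) → ℝ
  Xi_nonempty : ∀ i : Fin M,
    {ξ : Fin T → Fin (nξ i) → ℝ |
      ∀ r, wvec i r ≤ ∑ p : Fin T × Fin (nξ i), W i r p * ξ p.1 p.2}.Nonempty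
  Xi_compact : ∀ i : Fin M,
    IsCompact {ξ : Fin T → Fin (nξ i) → ℝ |
      ∀ r, wvec i r ≤ ∑ p : Fin T × Fin (nξ i), W i r p * ξ p.1 p.2}

namespace Sys

variable (S : Sys)

/-- State trajectories of agent `i` (stages `1, …, T+1`, zero-indexed). -/
abbrev StateTraj (i : Fin S.M) := Fin (S.T+1) → Fin (S.nx i) → ℝ

/-- Input trajectories of agent `i`. -/
abbrev InputTraj (i : Fin S.M) := Fin S.T → Fin (S.nu i) → ℝ

/-- Uncertainty trajectories of agent `i`. -/
abbrev NoiseTraj (i : Fin S.M) := Fin S.T → Fin (S.nξ i) → ℝ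

/-- Families of (belief) state trajectories, one for each agent. -/
abbrev Beliefs := ∀ j : Fin S.M, Fin (S.T+1) → Fin (S.nx j) → ℝ

/-- Joint uncertainty trajectories. -/
abbrev NoiseAll := ∀ j : Fin S.M, S.NoiseTraj j

/-- The polyhedral uncertainty set `Ξ_i = {ξ : W_i ξ ≥ w_i}`. -/
def Xi (i : Fin S.M) : Set (S.NoiseTraj i) :=
  {ξ | ∀ r, S.wvec i r ≤ ∑ p : Fin S.T × Fin (S.nξ i), S.W i r p * ξ p.1 p.2}

/-- The joint uncertainty set `Ξ_M = ∏_i Ξ_i`. -/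
def XiM : Set S.NoiseAll := {ξ | ∀ j, ξ j ∈ S.Xi j}

/-- The operational constraint set `O_i`: `H_{x,i} x_i + H_{u,i} u_i ≤ h_i`. -/
def InO (i : Fin S.M) (x : S.StateTraj i) (u : S.InputTraj i) : Prop :=
  ∀ r, (∑ p : Fin (S.T+1) × Fin (S.nx i), S.Hx i r p * x p.1 p.2)
      + (∑ p : Fin S.T × Fin (S.nu i), S.Hu i r p * u p.1 p.2) ≤ S.hvec i r

/-- The cost `J_i(x_i, u_i) = ∑_{t=1}^T (‖Q_i x_{i,t}‖_q + ‖R_i u_{i,t}‖_q)`. -/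
noncomputable def cost (i : Fin S.M) (x : S.StateTraj i) (u : S.InputTraj i) : ℝ :=
  ∑ t : Fin S.T,
    (normQ S.qOne ((S.Q i).mulVec (x t.castSucc)) + normQ S.qOne ((S.R i).mulVec (u t)))

/-- Closed-loop joint dynamics: state of each agent at (zero-based) time `t`,
given inputs `u` and uncertainties `ξ`. -/
noncomputable def jointAux (u : ∀ i : Fin S.M, S.InputTraj i) (ξ : S.NoiseAll) :
    ℕ → ∀ i : Fin S.M, Fin (S.nx i) → ℝ
  | 0 => fun i => S.xinit i
  | (t+1) => fun i =>
      if h : t < S.T then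
        (S.A i ⟨t, h⟩).mulVec (jointAux u ξ t i)
        + ∑ j ∈ S.Nbr i, (S.B i ⟨t, h⟩ j).mulVec (jointAux u ξ t j)
        + (S.D i ⟨t, h⟩).mulVec (u i ⟨t, h⟩)
        + (S.E i ⟨t, h⟩).mulVec (ξ i ⟨t, h⟩)
      else 0

/-- Policies with access to the full uncertainty history (centralized /
partially nested information, depending on the causality requirement imposed). -/
abbrev CPolicy := ∀ i : Fin S.M, Fin S.T → S.NoiseAll → Fin (S.nu i) → ℝ

/-- Closed-loop inputs of a centralized/partially nested policy. -/
noncomputable def clInput (Φ : S.CPolicy) (ξ : S.NoiseAll) (i : Fin S.M) : S.InputTraj i :=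
  fun t => Φ i t ξ

/-- Closed-loop state trajectories of a centralized/partially nested policy. -/
noncomputable def clState (Φ : S.CPolicy) (ξ : S.NoiseAll) (i : Fin S.M) : S.StateTraj i :=
  fun τ => S.jointAux (fun i' t => Φ i' t ξ) ξ τ.val i

/-- Strict causality: `Φ_{i,t}` is a function of `ξ_M^{t-1}` only. -/
def CCausal (Φ : S.CPolicy) : Prop :=
  ∀ i (t : Fin S.T) (ξ ξ' : S.NoiseAll),
    (∀ j : Fin S.M, ∀ τ : Fin S.T, (τ : ℕ) < (t : ℕ) → ξ j τ = ξ' j τ) →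
    Φ i t ξ = Φ i t ξ'

/-- Partially nested causality: `Φ_{i,t}` is a function of `ξ_{N̄_i}^{t-1}` only. -/
def PNCausal (Φ : S.CPolicy) : Prop :=
  ∀ i (t : Fin S.T) (ξ ξ' : S.NoiseAll),
    (∀ j ∈ S.Nbar i, ∀ τ : Fin S.T, (τ : ℕ) < (t : ℕ) → ξ j τ = ξ' j τ) →
    Φ i t ξ = Φ i t ξ'

/-- Robust feasibility of the closed loop: operational constraints hold for every
`ξ_M ∈ Ξ_M`. -/
def feasRobust (Φ : S.CPolicy) : Prop :=
  ∀ ξ ∈ S.XiM, ∀ i, S.InO i (S.clState Φ ξ i) (S.clInput Φ ξ i)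

/-- Feasibility for the centralized problem `P_C`. -/
def feasC (Φ : S.CPolicy) : Prop := S.CCausal Φ ∧ S.feasRobust Φ

/-- Feasibility for the partially nested problem `P_PN`. -/
def feasPN (Φ : S.CPolicy) : Prop := S.PNCausal Φ ∧ S.feasRobust Φ

/-- Objective of `P_C`: `∑_i sup_{ξ_M ∈ Ξ_M} J_i`. -/
noncomputable def objC (Φ : S.CPolicy) : EReal :=
  ∑ i : Fin S.M,
    sSup ((fun ξ => ((S.cost i (S.clState Φ ξ i) (S.clInput Φ ξ i) : ℝ) : EReal)) '' S.XiM)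

/-- Objective of `P_PN`: `∑_i sup_{ξ_{N̄_i} ∈ Ξ_{N̄_i}} J_i`, the supremum over
`Ξ_{N̄_i}` being encoded by pinning the coordinates outside `N̄_i` to a fixed
selection `ξ0 ∈ Ξ_M`. -/
noncomputable def objPN (Φ : S.CPolicy) (ξ0 : S.NoiseAll) : EReal :=
  ∑ i : Fin S.M,
    sSup ((fun ξ => ((S.cost i (S.clState Φ ξ i) (S.clInput Φ ξ i) : ℝ) : EReal)) ''
      {ξ | ξ ∈ S.XiM ∧ ∀ j ∉ S.Nbar i, ξ j = ξ0 j})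

/-- Optimal value of the centralized problem `P_C`. -/
noncomputable def valC : EReal := sInf {v : EReal | ∃ Φ : S.CPolicy, S.feasC Φ ∧ v = S.objC Φ}

/-- Optimal value of the partially nested problem `P_PN`. -/
noncomputable def valPN (ξ0 : S.NoiseAll) : EReal :=
  sInf {v : EReal | ∃ Φ : S.CPolicy, S.feasPN Φ ∧ v = S.objPN Φ ξ0}

end Sys
namespace Sys

variable (S : Sys)

/-- Policies of the local information exchange problem: `Ψ_{i,t}` sees the own
uncertainty trajectory and the neighbours' belief trajectories. -/
abbrev LPolicy := ∀ i : Fin S.M, Fin S.T → S.NoiseTraj i → S.Beliefs → Fin (S.nu i) → ℝ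

/-- Causality for local policies: `Ψ_{i,t}` depends only on `ξ_i^{t-1}` and
`ζ_{N_i}^t`. -/
def LCausal (Ψ : S.LPolicy) : Prop :=
  ∀ i (t : Fin S.T) (ξ ξ' : S.NoiseTraj i) (ζ ζ' : S.Beliefs),
    (∀ τ : Fin S.T, (τ : ℕ) < (t : ℕ) → ξ τ = ξ' τ) →
    (∀ j ∈ S.Nbr i, ∀ τ : Fin (S.T+1), (τ : ℕ) ≤ (t : ℕ) → ζ j τ = ζ' j τ) →
    Ψ i t ξ ζ = Ψ i t ξ' ζ'

/-- The dynamics `f_i`: state of agent `i` at (zero-based) time `t`, driven by the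
neighbour (belief) trajectories `ζ`, inputs `u` and uncertainties `ξ`. -/
noncomputable def trajAux (i : Fin S.M) (ζ : S.Beliefs) (u : S.InputTraj i)
    (ξ : S.NoiseTraj i) : ℕ → Fin (S.nx i) → ℝ
  | 0 => S.xinit i
  | (t+1) =>
      if h : t < S.T then
        (S.A i ⟨t, h⟩).mulVec (trajAux i ζ u ξ t)
        + ∑ j ∈ S.Nbr i, (S.B i ⟨t, h⟩ j).mulVec (ζ j ⟨t, Nat.lt_succ_of_lt h⟩)
        + (S.D i ⟨t, h⟩).mulVec (u ⟨t, h⟩)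
        + (S.E i ⟨t, h⟩).mulVec (ξ ⟨t, h⟩)
      else 0

/-- The state trajectory `f_i(ζ_{N_i}, u_i, ξ_i)`. -/
noncomputable def traj (i : Fin S.M) (ζ : S.Beliefs) (u : S.InputTraj i)
    (ξ : S.NoiseTraj i) : S.StateTraj i := fun τ => S.trajAux i ζ u ξ τ.val

/-- Closed-loop inputs of a local policy. -/
noncomputable def lInput (Ψ : S.LPolicy) (i : Fin S.M) (ξ : S.NoiseTraj i) (ζ : S.Beliefs) :
    S.InputTraj i := fun t => Ψ i t ξ ζ

/-- Closed-loop state of a local policy. -/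
noncomputable def lState (Ψ : S.LPolicy) (i : Fin S.M) (ξ : S.NoiseTraj i) (ζ : S.Beliefs) :
    S.StateTraj i := S.traj i ζ (S.lInput Ψ i ξ ζ) ξ

/-- The belief constraint set `X_{N_i} = ∏_{j ∈ N_i} X_j` (coordinates outside `N_i`
are unconstrained; they are irrelevant by causality). -/
def BelSet (X : ∀ i : Fin S.M, Set (S.StateTraj i)) (i : Fin S.M) : Set S.Beliefs :=
  {ζ | ∀ j ∈ S.Nbr i, ζ j ∈ X j}

/-- Robust constraints of the local problem: for every belief in `X_{N_i}` and every
`ξ_i ∈ Ξ_i`, the operational constraints hold and the own state lies in `X_i`. -/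
def feasLcon (Ψ : S.LPolicy) (X : ∀ i : Fin S.M, Set (S.StateTraj i)) : Prop :=
  ∀ i, ∀ ζ ∈ S.BelSet X i, ∀ ξ ∈ S.Xi i,
    S.InO i (S.lState Ψ i ξ ζ) (S.lInput Ψ i ξ ζ) ∧ S.lState Ψ i ξ ζ ∈ X i

/-- Feasibility for the local problem `P_L`: causal policies, nonempty compact
state-forecast sets, and robust constraints. -/
def feasL (Ψ : S.LPolicy) (X : ∀ i : Fin S.M, Set (S.StateTraj i)) : Prop :=
  S.LCausal Ψ ∧ (∀ i, (X i).Nonempty ∧ IsCompact (X i)) ∧ S.feasLcon Ψ X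

/-- Objective of `P_L`: `∑_i sup_{ξ_i ∈ Ξ_i, ζ_{N_i} ∈ X_{N_i}} J_i`. -/
noncomputable def objL (Ψ : S.LPolicy) (X : ∀ i : Fin S.M, Set (S.StateTraj i)) : EReal :=
  ∑ i : Fin S.M,
    sSup ((fun p : S.NoiseTraj i × S.Beliefs =>
        ((S.cost i (S.lState Ψ i p.1 p.2) (S.lInput Ψ i p.1 p.2) : ℝ) : EReal)) ''
      {p | p.1 ∈ S.Xi i ∧ p.2 ∈ S.BelSet X i})

/-- Optimal value of the local problem `P_L`. -/
noncomputable def valL : EReal :=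
  sInf {v : EReal | ∃ (Ψ : S.LPolicy) (X : ∀ i : Fin S.M, Set (S.StateTraj i)),
    S.feasL Ψ X ∧ v = S.objL Ψ X}

end Sys
namespace Sys

variable (S : Sys)

/-- State-feedback local policies: `ψ_{i,t}` sees the own state history and the
neighbours' belief trajectories. -/
abbrev SFPolicy := ∀ i : Fin S.M, Fin S.T → S.StateTraj i → S.Beliefs → Fin (S.nu i) → ℝ

/-- Causality for state-feedback local policies: `ψ_{i,t}` depends only on `x_i^t`
and `ζ_{N_i}^t`. -/
def SFCausal (ψ : S.SFPolicy) : Prop :=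
  ∀ i (t : Fin S.T) (x x' : S.StateTraj i) (ζ ζ' : S.Beliefs),
    (∀ τ : Fin (S.T+1), (τ : ℕ) ≤ (t : ℕ) → x τ = x' τ) →
    (∀ j ∈ S.Nbr i, ∀ τ : Fin (S.T+1), (τ : ℕ) ≤ (t : ℕ) → ζ j τ = ζ' j τ) →
    ψ i t x ζ = ψ i t x' ζ'

/-- Closed loop of a state-feedback local policy: the state at (zero-based) time `t`,
defined recursively; the policy is fed the state history up to the current time
(padded with `0` afterwards). -/
noncomputable def sfAux (i : Fin S.M)
    (ψi : Fin S.T → S.StateTraj i → S.Beliefs → Fin (S.nu i) → ℝ)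
    (ξ : S.NoiseTraj i) (ζ : S.Beliefs) : ℕ → Fin (S.nx i) → ℝ
  | 0 => S.xinit i
  | (t+1) =>
      if h : t < S.T then
        (S.A i ⟨t, h⟩).mulVec (sfAux i ψi ξ ζ t)
        + ∑ j ∈ S.Nbr i, (S.B i ⟨t, h⟩ j).mulVec (ζ j ⟨t, Nat.lt_succ_of_lt h⟩)
        + (S.D i ⟨t, h⟩).mulVec (ψi ⟨t, h⟩
            (fun τ : Fin (S.T+1) =>
              if hτ : (τ : ℕ) ≤ t then sfAux i ψi ξ ζ τ.val else 0) ζ)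
        + (S.E i ⟨t, h⟩).mulVec (ξ ⟨t, h⟩)
      else 0
  termination_by t => t
  decreasing_by all_goals omega

/-- Closed-loop inputs of a state-feedback local policy:
`u_{i,t} = ψ_{i,t}(x_i^t, ζ_{N_i}^t)`. -/
noncomputable def sfInput (ψ : S.SFPolicy) (i : Fin S.M) (ξ : S.NoiseTraj i) (ζ : S.Beliefs) :
    S.InputTraj i :=
  fun t => ψ i t
    (fun τ : Fin (S.T+1) => if (τ : ℕ) ≤ (t : ℕ) then S.sfAux i (ψ i) ξ ζ τ.val else 0) ζ

/-- Closed-loop state of a state-feedback local policy. -/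
noncomputable def sfState (ψ : S.SFPolicy) (i : Fin S.M) (ξ : S.NoiseTraj i) (ζ : S.Beliefs) :
    S.StateTraj i := fun τ => S.sfAux i (ψ i) ξ ζ τ.val

/-- Feasibility for the state-feedback local problem `P_L^x`. -/
def feasLx (ψ : S.SFPolicy) (X : ∀ i : Fin S.M, Set (S.StateTraj i)) : Prop :=
  S.SFCausal ψ ∧ (∀ i, (X i).Nonempty ∧ IsCompact (X i)) ∧
  ∀ i, ∀ ζ ∈ S.BelSet X i, ∀ ξ ∈ S.Xi i,
    S.InO i (S.sfState ψ i ξ ζ) (S.sfInput ψ i ξ ζ) ∧ S.sfState ψ i ξ ζ ∈ X i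

/-- Objective of `P_L^x`. -/
noncomputable def objLx (ψ : S.SFPolicy) (X : ∀ i : Fin S.M, Set (S.StateTraj i)) : EReal :=
  ∑ i : Fin S.M,
    sSup ((fun p : S.NoiseTraj i × S.Beliefs =>
        ((S.cost i (S.sfState ψ i p.1 p.2) (S.sfInput ψ i p.1 p.2) : ℝ) : EReal)) ''
      {p | p.1 ∈ S.Xi i ∧ p.2 ∈ S.BelSet X i})

/-- Optimal value of `P_L^x`. -/
noncomputable def valLx : EReal :=
  sInf {v : EReal | ∃ (ψ : S.SFPolicy) (X : ∀ i : Fin S.M, Set (S.StateTraj i)),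
    S.feasLx ψ X ∧ v = S.objLx ψ X}

end Sys


/-! Since every `E_{i,t}` has full column rank it has a left inverse `F_{i,t}`, and along the
closed loop of a causal policy `Ψ` the uncertainty can be read off causally from states and
beliefs: `ξ_{i,t} = F_{i,t} (x_{i,t+1} - A x_{i,t} - B ζ_t - D u_{i,t})`, where the input
`u_{i,t}` is itself recomputed by `Ψ` from the uncertainty recovered before time `t`. Feeding
`Ψ` the recovered uncertainty is a causal state-feedback policy with the same closed loop.
Conversely, a state-feedback policy is reproduced by the uncertainty-feedback policy that
simulates its closed loop, so both problems attain the same set of objective values. -/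

open Matrix

theorem Matrix.exists_leftInverse_mulVec_of_rank_eq_card {K m n : Type*} [Field K] [Fintype m]
    [Fintype n] [DecidableEq m] (E : Matrix m n K) (h : E.rank = Fintype.card n) :
    ∃ F : Matrix n m K, Function.LeftInverse F.mulVec E.mulVec := by
  have hker : LinearMap.ker E.mulVecLin = ⊥ := by
    have hdim := LinearMap.finrank_range_add_finrank_ker E.mulVecLin
    rw [← Matrix.rank, h, Module.finrank_fintype_fun_eq_card, add_eq_left] at hdim
    exact Submodule.finrank_eq_zero.mp hdim
  obtain ⟨g, hg⟩ := LinearMap.exists_leftInverse_of_injective E.mulVecLin hker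
  exact ⟨LinearMap.toMatrix' g, fun v => by
    rw [LinearMap.toMatrix'_mulVec]
    exact LinearMap.congr_fun hg v⟩

namespace Sys

variable (S : Sys) {i : Fin S.M}

section Trajectories

variable (i) (ζ : S.Beliefs) (ξ : S.NoiseTraj i)

theorem traj_zero (u : S.InputTraj i) : S.traj i ζ u ξ 0 = S.xinit i := by
  rw [traj, Fin.val_zero, trajAux]

theorem traj_succ (u : S.InputTraj i) (t : Fin S.T) :
    S.traj i ζ u ξ t.succ = S.A i t *ᵥ S.traj i ζ u ξ t.castSucc
      + ∑ j ∈ S.Nbr i, S.B i t j *ᵥ ζ j t.castSucc + S.D i t *ᵥ u t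
      + S.E i t *ᵥ ξ t := by
  rw [traj, Fin.val_succ, trajAux, dif_pos t.isLt]
  rfl

theorem sfState_zero (ψ : S.SFPolicy) : S.sfState ψ i ξ ζ 0 = S.xinit i := by
  rw [sfState, Fin.val_zero, sfAux]

theorem sfState_succ (ψ : S.SFPolicy) (t : Fin S.T) :
    S.sfState ψ i ξ ζ t.succ = S.A i t *ᵥ S.sfState ψ i ξ ζ t.castSucc
      + ∑ j ∈ S.Nbr i, S.B i t j *ᵥ ζ j t.castSucc + S.D i t *ᵥ S.sfInput ψ i ξ ζ t
      + S.E i t *ᵥ ξ t := by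
  rw [sfState, Fin.val_succ, sfAux, dif_pos t.isLt]
  rfl

end Trajectories

section StateFeedback

variable {S} {ψ : S.SFPolicy} {ξ ξ' : S.NoiseTraj i} {ζ ζ' : S.Beliefs}

theorem sfInput_apply_of_causal (hψ : S.SFCausal ψ) (t : Fin S.T) :
    S.sfInput ψ i ξ ζ t = ψ i t (S.sfState ψ i ξ ζ) ζ :=
  hψ i t _ _ ζ ζ (fun _ hτ => if_pos hτ) fun _ _ _ _ => rfl

def IsClosedLoop (ψ : S.SFPolicy) (i : Fin S.M) (ξ : S.NoiseTraj i) (ζ : S.Beliefs)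
    (x : S.StateTraj i) : Prop :=
  x 0 = S.xinit i ∧ ∀ t : Fin S.T, x t.succ = S.A i t *ᵥ x t.castSucc
    + ∑ j ∈ S.Nbr i, S.B i t j *ᵥ ζ j t.castSucc + S.D i t *ᵥ ψ i t x ζ
    + S.E i t *ᵥ ξ t

theorem isClosedLoop_sfState (hψ : S.SFCausal ψ) :
    S.IsClosedLoop ψ i ξ ζ (S.sfState ψ i ξ ζ) :=
  ⟨S.sfState_zero i ζ ξ ψ, fun t => by rw [S.sfState_succ, sfInput_apply_of_causal hψ]⟩

theorem IsClosedLoop.eq_of_le (hψ : S.SFCausal ψ) {x x' : S.StateTraj i}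
    (hx : S.IsClosedLoop ψ i ξ ζ x) (hx' : S.IsClosedLoop ψ i ξ' ζ' x') (t : Fin (S.T+1))
    (hξ : ∀ σ : Fin S.T, (σ : ℕ) < t → ξ σ = ξ' σ)
    (hζ : ∀ j ∈ S.Nbr i, ∀ τ : Fin (S.T+1), (τ : ℕ) < t → ζ j τ = ζ' j τ) :
    ∀ τ : Fin (S.T+1), (τ : ℕ) ≤ t → x τ = x' τ := by
  induction t using Fin.induction with
  | zero =>
    intro τ hτ
    rw [Fin.le_zero_iff.mp hτ, hx.1, hx'.1]
  | succ t ih =>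
    simp only [Fin.val_succ, Fin.val_castSucc] at ih hξ hζ ⊢
    have hprev := ih (fun σ hσ => hξ σ (by omega)) (fun j hj τ hτ => hζ j hj τ (by omega))
    intro τ hτ
    by_cases hτt : (τ : ℕ) ≤ t
    · exact hprev τ hτt
    have hinput : ψ i t x ζ = ψ i t x' ζ' :=
      hψ i t x x' ζ ζ' hprev fun j hj τ hτ => hζ j hj τ (by omega)
    have hnbr : ∀ j ∈ S.Nbr i, ζ j t.castSucc = ζ' j t.castSucc :=
      fun j hj => hζ j hj _ (by simp)
    rw [show τ = t.succ by ext; simp only [Fin.val_succ]; omega, hx.2, hx'.2,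
      hprev t.castSucc (by simp), Finset.sum_congr rfl fun j hj => by rw [hnbr j hj], hinput,
      hξ t (by omega)]

theorem IsClosedLoop.eq_sfState (hψ : S.SFCausal ψ) {x : S.StateTraj i}
    (hx : S.IsClosedLoop ψ i ξ ζ x) : x = S.sfState ψ i ξ ζ :=
  funext fun τ => hx.eq_of_le hψ (isClosedLoop_sfState hψ) (Fin.last _) (fun _ _ => rfl)
    (fun _ _ _ _ => rfl) τ (Fin.le_last τ)

end StateFeedback

section NoiseRecovery

variable {S}
variable (F : ∀ i : Fin S.M, Fin S.T → Matrix (Fin (S.nξ i)) (Fin (S.nx i)) ℝ)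
  (Ψ : S.LPolicy)

def IsLeftInverseOfE : Prop := ∀ i t, Function.LeftInverse (F i t).mulVec (S.E i t).mulVec

def innovation (i : Fin S.M) (t : Fin S.T) (x : S.StateTraj i) (ζ : S.Beliefs)
    (u : Fin (S.nu i) → ℝ) : Fin (S.nx i) → ℝ :=
  x t.succ - S.A i t *ᵥ x t.castSucc - ∑ j ∈ S.Nbr i, S.B i t j *ᵥ ζ j t.castSucc
    - S.D i t *ᵥ u

theorem innovation_traj (ζ : S.Beliefs) (u : S.InputTraj i) (ξ : S.NoiseTraj i)
    (t : Fin S.T) :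
    S.innovation i t (S.traj i ζ u ξ) ζ (u t) = S.E i t *ᵥ ξ t := by
  rw [innovation, traj_succ]
  abel

noncomputable def recoveredNoise (i : Fin S.M) (x : S.StateTraj i) (ζ : S.Beliefs)
    (t : Fin S.T) : Fin (S.nξ i) → ℝ :=
  F i t *ᵥ S.innovation i t x ζ
    (Ψ i t (fun σ => if σ < t then recoveredNoise i x ζ σ else 0) ζ)
termination_by t.val
decreasing_by assumption

noncomputable def sfPolicyOfL : S.SFPolicy :=
  fun i t x ζ => Ψ i t (fun σ => if σ < t then S.recoveredNoise F Ψ i x ζ σ else 0) ζ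

theorem recoveredNoise_eq (x : S.StateTraj i) (ζ : S.Beliefs) (t : Fin S.T) :
    S.recoveredNoise F Ψ i x ζ t =
      F i t *ᵥ S.innovation i t x ζ (S.sfPolicyOfL F Ψ i t x ζ) := by
  rw [recoveredNoise]
  rfl


variable {F Ψ}

theorem recoveredNoise_congr (hΨ : S.LCausal Ψ) {x x' : S.StateTraj i} {ζ ζ' : S.Beliefs}
    (t : Fin S.T) (hx : ∀ τ : Fin (S.T+1), (τ : ℕ) ≤ t + 1 → x τ = x' τ)
    (hζ : ∀ j ∈ S.Nbr i, ∀ τ : Fin (S.T+1), (τ : ℕ) ≤ t → ζ j τ = ζ' j τ) :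
    S.recoveredNoise F Ψ i x ζ t = S.recoveredNoise F Ψ i x' ζ' t := by
  induction t using WellFoundedLT.induction with
  | _ t ih =>
    have hpolicy : S.sfPolicyOfL F Ψ i t x ζ = S.sfPolicyOfL F Ψ i t x' ζ' := by
      refine hΨ i t _ _ ζ ζ' (fun σ (hσ : σ < t) => ?_) hζ
      rw [if_pos hσ, if_pos hσ]
      exact ih σ hσ (fun τ hτ => hx τ (by omega)) fun j hj τ hτ => hζ j hj τ (by omega)
    have hnbr : ∀ j ∈ S.Nbr i, ζ j t.castSucc = ζ' j t.castSucc :=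
      fun j hj => hζ j hj _ (by simp)
    rw [recoveredNoise_eq, recoveredNoise_eq, innovation, innovation, hpolicy,
      hx t.succ (by simp), hx t.castSucc (by simp),
      Finset.sum_congr rfl fun j hj => by rw [hnbr j hj]]

theorem sfCausal_sfPolicyOfL (hΨ : S.LCausal Ψ) : S.SFCausal (S.sfPolicyOfL F Ψ) := by
  intro i t x x' ζ ζ' hx hζ
  refine hΨ i t _ _ ζ ζ' (fun σ (hσ : σ < t) => ?_) hζ
  rw [if_pos hσ, if_pos hσ]
  exact S.recoveredNoise_congr hΨ σ (fun τ hτ => hx τ (by omega))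
    fun j hj τ hτ => hζ j hj τ (by omega)

theorem sfPolicyOfL_eq_of_recoveredNoise (hΨ : S.LCausal Ψ) {x : S.StateTraj i}
    {ζ : S.Beliefs} {ξ : S.NoiseTraj i} {t : Fin S.T}
    (h : ∀ σ < t, S.recoveredNoise F Ψ i x ζ σ = ξ σ) :
    S.sfPolicyOfL F Ψ i t x ζ = Ψ i t ξ ζ :=
  hΨ i t _ _ ζ ζ (fun σ hσ => (if_pos hσ).trans (h σ hσ)) fun _ _ _ _ => rfl

theorem recoveredNoise_lState (hF : S.IsLeftInverseOfE F)
    (hΨ : S.LCausal Ψ) (ξ : S.NoiseTraj i) (ζ : S.Beliefs) (t : Fin S.T) :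
    S.recoveredNoise F Ψ i (S.lState Ψ i ξ ζ) ζ t = ξ t := by
  induction t using WellFoundedLT.induction with
  | _ t ih =>
    rw [recoveredNoise_eq, S.sfPolicyOfL_eq_of_recoveredNoise hΨ ih]
    exact (congrArg _ (S.innovation_traj ζ (S.lInput Ψ i ξ ζ) ξ t)).trans (hF i t (ξ t))

theorem sfPolicyOfL_lState (hF : S.IsLeftInverseOfE F)
    (hΨ : S.LCausal Ψ) (ξ : S.NoiseTraj i) (ζ : S.Beliefs) (t : Fin S.T) :
    S.sfPolicyOfL F Ψ i t (S.lState Ψ i ξ ζ) ζ = S.lInput Ψ i ξ ζ t :=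
  S.sfPolicyOfL_eq_of_recoveredNoise hΨ fun σ _ => S.recoveredNoise_lState hF hΨ ξ ζ σ

theorem isClosedLoop_lState (hF : S.IsLeftInverseOfE F)
    (hΨ : S.LCausal Ψ) (ξ : S.NoiseTraj i) (ζ : S.Beliefs) :
    S.IsClosedLoop (S.sfPolicyOfL F Ψ) i ξ ζ (S.lState Ψ i ξ ζ) :=
  ⟨S.traj_zero i ζ ξ _, fun t => by
    rw [S.sfPolicyOfL_lState hF hΨ]
    exact S.traj_succ i ζ ξ _ t⟩

end NoiseRecovery

structure ClosedLoopEquiv (ψ : S.SFPolicy) (Ψ : S.LPolicy) : Prop where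
  sfCausal : S.SFCausal ψ
  lCausal : S.LCausal Ψ
  state_eq : ∀ i ξ ζ, S.sfState ψ i ξ ζ = S.lState Ψ i ξ ζ
  input_eq : ∀ i ξ ζ, S.sfInput ψ i ξ ζ = S.lInput Ψ i ξ ζ

namespace ClosedLoopEquiv

variable {S} {ψ : S.SFPolicy} {Ψ : S.LPolicy}

theorem feasLx_iff (h : S.ClosedLoopEquiv ψ Ψ) (X : ∀ i : Fin S.M, Set (S.StateTraj i)) :
    S.feasLx ψ X ↔ S.feasL Ψ X := by
  simp only [feasLx, feasL, feasLcon, h.state_eq, h.input_eq, h.sfCausal, h.lCausal, true_and]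

theorem objLx_eq (h : S.ClosedLoopEquiv ψ Ψ) (X : ∀ i : Fin S.M, Set (S.StateTraj i)) :
    S.objLx ψ X = S.objL Ψ X := by
  simp only [objLx, objL, h.state_eq, h.input_eq]

end ClosedLoopEquiv

theorem closedLoopEquiv_sfPolicyOfL
    {F : ∀ i : Fin S.M, Fin S.T → Matrix (Fin (S.nξ i)) (Fin (S.nx i)) ℝ}
    (hF : S.IsLeftInverseOfE F) {Ψ : S.LPolicy} (hΨ : S.LCausal Ψ) :
    S.ClosedLoopEquiv (S.sfPolicyOfL F Ψ) Ψ := by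
  have hψ := S.sfCausal_sfPolicyOfL (F := F) hΨ
  have hstate : ∀ i ξ ζ, S.sfState (S.sfPolicyOfL F Ψ) i ξ ζ = S.lState Ψ i ξ ζ :=
    fun i ξ ζ => ((S.isClosedLoop_lState hF hΨ ξ ζ).eq_sfState hψ).symm
  refine ⟨hψ, hΨ, hstate, fun i ξ ζ => funext fun t => ?_⟩
  rw [sfInput_apply_of_causal hψ, hstate, S.sfPolicyOfL_lState hF hΨ]

noncomputable def lPolicyOfSF (ψ : S.SFPolicy) : S.LPolicy :=
  fun i t ξ ζ => S.sfInput ψ i ξ ζ t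

theorem lState_lPolicyOfSF (ψ : S.SFPolicy) (ξ : S.NoiseTraj i) (ζ : S.Beliefs) :
    S.lState (S.lPolicyOfSF ψ) i ξ ζ = S.sfState ψ i ξ ζ := by
  funext τ
  induction τ using Fin.induction with
  | zero => exact (S.traj_zero i ζ ξ _).trans (S.sfState_zero i ζ ξ ψ).symm
  | succ t ih =>
    rw [S.sfState_succ, ← ih]
    exact S.traj_succ i ζ ξ _ t

theorem lCausal_lPolicyOfSF {ψ : S.SFPolicy} (hψ : S.SFCausal ψ) :
    S.LCausal (S.lPolicyOfSF ψ) := by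
  intro i t ξ ξ' ζ ζ' hξ hζ
  simp only [lPolicyOfSF, sfInput_apply_of_causal hψ]
  refine hψ i t _ _ ζ ζ' (fun τ hτ => ?_) hζ
  exact (isClosedLoop_sfState hψ).eq_of_le hψ (isClosedLoop_sfState hψ) t.castSucc hξ
    (fun j hj τ hτ => hζ j hj τ hτ.le) τ hτ

theorem closedLoopEquiv_lPolicyOfSF {ψ : S.SFPolicy} (hψ : S.SFCausal ψ) :
    S.ClosedLoopEquiv ψ (S.lPolicyOfSF ψ) :=
  ⟨hψ, S.lCausal_lPolicyOfSF hψ, fun _ ξ ζ => (S.lState_lPolicyOfSF ψ ξ ζ).symm,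
    fun _ _ _ => rfl⟩

end Sys

/-- Assume every matrix `E_{i,t}` has full column rank. Then for every
feasible pair `((Ψ_i)_i, (X_i)_i)` of the local problem `P_L` there exists a feasible
pair `((ψ_i)_i, (X_i)_i)` of the state-feedback local problem `P_L^x`, with the same
state-forecast sets, whose closed-loop state-input trajectories coincide with those of
`Ψ` for every `ξ_i ∈ Ξ_i` and `ζ_{N_i} ∈ X_{N_i}`, so that the two pairs achieve the
same objective value; consequently `val(P_L^x) = val(P_L)`. -/
theorem uncertaintyFeedback_to_stateFeedback (S : Sys)
    (hE : ∀ (i : Fin S.M) (t : Fin S.T), (S.E i t).rank = S.nξ i) :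
    (∀ (Ψ : S.LPolicy) (X : ∀ i : Fin S.M, Set (S.StateTraj i)), S.feasL Ψ X →
      ∃ ψ : S.SFPolicy, S.feasLx ψ X ∧
        (∀ i, ∀ ζ ∈ S.BelSet X i, ∀ ξ ∈ S.Xi i,
          S.sfState ψ i ξ ζ = S.lState Ψ i ξ ζ ∧ S.sfInput ψ i ξ ζ = S.lInput Ψ i ξ ζ) ∧
        S.objLx ψ X = S.objL Ψ X) ∧
    S.valLx = S.valL := by
  choose F hF using fun i t => (S.E i t).exists_leftInverse_mulVec_of_rank_eq_card
    ((hE i t).trans (Fintype.card_fin _).symm)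
  have toSF := fun Ψ (hΨ : S.LCausal Ψ) => S.closedLoopEquiv_sfPolicyOfL hF hΨ
  refine ⟨fun Ψ X hfeas => ?_, ?_⟩
  · have h := toSF Ψ hfeas.1
    exact ⟨_, (h.feasLx_iff X).2 hfeas,
      fun i ζ _ ξ _ => ⟨h.state_eq i ξ ζ, h.input_eq i ξ ζ⟩, h.objLx_eq X⟩
  unfold Sys.valLx Sys.valL
  congr 1
  ext v
  constructor
  · rintro ⟨ψ, X, hfeas, rfl⟩
    have h := S.closedLoopEquiv_lPolicyOfSF hfeas.1
    exact ⟨_, X, (h.feasLx_iff X).1 hfeas, h.objLx_eq X⟩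
  · rintro ⟨Ψ, X, hfeas, rfl⟩
    have h := toSF Ψ hfeas.1
    exact ⟨_, X, (h.feasLx_iff X).2 hfeas, (h.objLx_eq X).symm⟩
end

section
/- Let ((Ψ_i)_i,(X_i)_i) be a feasible pair of the local problem P_L. Define recursively, over stages, the maps χ̂_{i,t} by χ̂_{i,1} := x_{i,1} and χ̂_{i,t+1}(ξ_{N̄_i}^{t}) := A_{i,t} χ̂_{i,t}(ξ_{N̄_i}^{t−1}) + B_{i,t}[χ̂_{j,t}(ξ_{N̄_j}^{t−1})]_{j∈N_i} + D_{i,t} Ψ_{i,t}(ξ_i^{t−1}, [χ̂_j^t]_{j∈N_i}) + E_{i,t} ξ_{i,t}, where χ̂_j^t denotes the history (χ̂_{j,1},…,χ̂_{j,t}) (well defined since N̄_j ⊆ N̄_i for j ∈ N_i). Then: (i) for every i and every ξ_{N̄_i} ∈ Ξ_{N̄_i}, the full trajectory (χ̂_{i,1}(·),…,χ̂_{i,T+1}(·)) lies in X_i; (ii) the policy family Φ̂_{i,t}(ξ_{N̄_i}^{t−1}) := Ψ_{i,t}(ξ_i^{t−1}, [χ̂_j^t]_{j∈N_i}) is feasible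 for the partially nested problem P_PN; and (iii) its objective value in P_PN is at most that of ((Ψ_i)_i,(X_i)_i) in P_L, i.e., Σ_{i=1}^M sup_{ξ_{N̄_i}∈Ξ_{N̄_i}} J_i(χ̂_i, Φ̂_i) ≤ Σ_{i=1}^M sup_{ξ_i∈Ξ_i, ζ_{N_i}∈X_{N_i}} J_i(x_i,u_i). -/
open scoped BigOperators

namespace Sys

variable (S : Sys)

/-- The recursively defined trajectories `χ̂_{i,t}` induced by a local policy `Ψ`
when the beliefs are replaced by the actual (recursively generated) trajectories of
the neighbours:
`χ̂_{i,t+1} = A χ̂_{i,t} + B [χ̂_{j,t}]_{j ∈ N_i} + D Ψ_{i,t}(ξ_i^{t-1}, [χ̂_j^t]_{j ∈ N_i}) + E ξ_{i,t}`. -/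
noncomputable def hatAux (Ψ : S.LPolicy) (ξ : S.NoiseAll) :
    ℕ → ∀ i : Fin S.M, Fin (S.nx i) → ℝ
  | 0 => fun i => S.xinit i
  | (t+1) => fun i =>
      if h : t < S.T then
        (S.A i ⟨t, h⟩).mulVec (hatAux Ψ ξ t i)
        + ∑ j ∈ S.Nbr i, (S.B i ⟨t, h⟩ j).mulVec (hatAux Ψ ξ t j)
        + (S.D i ⟨t, h⟩).mulVec (Ψ i ⟨t, h⟩ (ξ i)
            (fun j (τ : Fin (S.T+1)) =>
              if hτ : (τ : ℕ) ≤ t then hatAux Ψ ξ τ.val j else 0))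
        + (S.E i ⟨t, h⟩).mulVec (ξ i ⟨t, h⟩)
      else 0
  termination_by t => t
  decreasing_by all_goals omega

/-- The trajectory `χ̂_i(ξ_{N̄_i})`. -/
noncomputable def hatTraj (Ψ : S.LPolicy) (ξ : S.NoiseAll) (i : Fin S.M) : S.StateTraj i :=
  fun τ => S.hatAux Ψ ξ τ.val i

/-- The partially nested policy `Φ̂_{i,t}(ξ_{N̄_i}^{t-1}) := Ψ_{i,t}(ξ_i^{t-1}, [χ̂_j^t]_{j ∈ N_i})`. -/
noncomputable def hatPolicy (Ψ : S.LPolicy) : S.CPolicy :=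
  fun i t ξ => Ψ i t (ξ i)
    (fun j (τ : Fin (S.T+1)) => if (τ : ℕ) ≤ (t : ℕ) then S.hatAux Ψ ξ τ.val j else 0)

end Sys

/-!
Feeding every agent the true trajectories of its neighbours turns `Ψ` into the closed loop
`χ̂`, and by causality `χ̂_i` only sees `ξ_{N̄_i}`. That `χ̂_i ∈ X_i` follows by iterating the
local problem: starting from arbitrary beliefs in the `X_j`, each round replaces every
agent's belief by its own local trajectory, which stays in `X_i` by feasibility and, by
causality, agrees with `χ̂_i` on one more stage than before; after `T + 1` rounds it is `χ̂_i`.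
With these beliefs the local constraints and costs of `P_L` are exactly those of `Φ̂` in `P_PN`.
-/

namespace Sys

variable {S : Sys} {Ψ : S.LPolicy}

lemma hatAux_zero (ξ : S.NoiseAll) (i : Fin S.M) : S.hatAux Ψ ξ 0 i = S.xinit i := by
  rw [hatAux]

lemma hatAux_succ_of_lt (ξ : S.NoiseAll) {t : ℕ} (h : t < S.T) (i : Fin S.M) :
    S.hatAux Ψ ξ (t + 1) i =
      (S.A i ⟨t, h⟩).mulVec (S.hatAux Ψ ξ t i)
      + ∑ j ∈ S.Nbr i, (S.B i ⟨t, h⟩ j).mulVec (S.hatAux Ψ ξ t j)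
      + (S.D i ⟨t, h⟩).mulVec (S.hatPolicy Ψ i ⟨t, h⟩ ξ)
      + (S.E i ⟨t, h⟩).mulVec (ξ i ⟨t, h⟩) := by
  rw [hatAux]
  exact dif_pos h

lemma hatAux_succ_of_not_lt (ξ : S.NoiseAll) {t : ℕ} (h : ¬t < S.T) (i : Fin S.M) :
    S.hatAux Ψ ξ (t + 1) i = 0 := by
  rw [hatAux]
  exact dif_neg h

lemma LCausal.apply_eq_hatPolicy (hC : S.LCausal Ψ) {i : Fin S.M} {t : Fin S.T}
    {ξ : S.NoiseAll} {ξi : S.NoiseTraj i} {ζ : S.Beliefs}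
    (hξ : ∀ τ : Fin S.T, (τ : ℕ) < t → ξi τ = ξ i τ)
    (hζ : ∀ j ∈ S.Nbr i, ∀ τ : Fin (S.T + 1), (τ : ℕ) ≤ t → ζ j τ = S.hatTraj Ψ ξ j τ) :
    Ψ i t ξi ζ = S.hatPolicy Ψ i t ξ :=
  hC i t ξi (ξ i) ζ _ hξ fun j hj τ hτ => by rw [if_pos hτ]; exact hζ j hj τ hτ

lemma hatPolicy_congr (hC : S.LCausal Ψ) {i : Fin S.M} {t : Fin S.T} {ξ ξ' : S.NoiseAll}
    (hξ : ∀ τ : Fin S.T, (τ : ℕ) < t → ξ i τ = ξ' i τ)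
    (hχ : ∀ j ∈ S.Nbr i, ∀ τ : Fin (S.T + 1), (τ : ℕ) ≤ t →
      S.hatTraj Ψ ξ j τ = S.hatTraj Ψ ξ' j τ) :
    S.hatPolicy Ψ i t ξ = S.hatPolicy Ψ i t ξ' :=
  hC.apply_eq_hatPolicy hξ fun j hj τ hτ => by rw [if_pos hτ]; exact hχ j hj τ hτ

lemma hatAux_congr (hC : S.LCausal Ψ) {ξ ξ' : S.NoiseAll} (t : ℕ) (i : Fin S.M)
    (hξ : ∀ j ∈ S.Nbar i, ∀ τ : Fin S.T, (τ : ℕ) < t → ξ j τ = ξ' j τ) :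
    S.hatAux Ψ ξ t i = S.hatAux Ψ ξ' t i := by
  induction t using Nat.strong_induction_on generalizing i with
  | _ t ih =>
    rcases t with _ | t
    · rw [hatAux_zero, hatAux_zero]
    by_cases h : t < S.T
    swap
    · rw [hatAux_succ_of_not_lt ξ h, hatAux_succ_of_not_lt ξ' h]
    have hnbr : ∀ j ∈ S.Nbr i, ∀ s ≤ t, S.hatAux Ψ ξ s j = S.hatAux Ψ ξ' s j :=
      fun j hj s hs => ih s (by omega) j fun k hk τ hτ =>
        hξ k (S.Nbar_nested i j hj hk) τ (by omega)
    rw [hatAux_succ_of_lt ξ h, hatAux_succ_of_lt ξ' h,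
      ih t (by omega) i fun j hj τ hτ => hξ j hj τ (by omega),
      Finset.sum_congr rfl fun j hj => by rw [hnbr j hj t le_rfl],
      hatPolicy_congr hC (fun τ hτ => hξ i (S.Nbar_self i) τ (Nat.lt_succ_of_lt hτ))
        fun j hj τ hτ => hnbr j hj τ hτ,
      hξ i (S.Nbar_self i) ⟨t, h⟩ (by simp)]

lemma hatPolicy_pnCausal (hC : S.LCausal Ψ) : S.PNCausal (S.hatPolicy Ψ) :=
  fun i _ _ _ hξ => hatPolicy_congr hC (fun τ hτ => hξ i (S.Nbar_self i) τ hτ)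
    fun j hj τ hτ => hatAux_congr hC τ j fun k hk σ hσ =>
      hξ k (S.Nbar_nested i j hj hk) σ (by omega)

lemma lState_eq_hatTraj_of_le (hC : S.LCausal Ψ) (ξ : S.NoiseAll) {i : Fin S.M}
    {ζ : S.Beliefs} {N : ℕ}
    (hζ : ∀ j ∈ S.Nbr i, ∀ τ : Fin (S.T + 1), (τ : ℕ) < N → ζ j τ = S.hatTraj Ψ ξ j τ)
    (τ : Fin (S.T + 1)) (hτ : (τ : ℕ) ≤ N) :
    S.lState Ψ i (ξ i) ζ τ = S.hatTraj Ψ ξ i τ := by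
  suffices ∀ t ≤ N, S.trajAux i ζ (S.lInput Ψ i (ξ i) ζ) (ξ i) t = S.hatAux Ψ ξ t i from
    this τ hτ
  intro t ht
  induction t with
  | zero => rw [trajAux, hatAux_zero]
  | succ t ih =>
    by_cases h : t < S.T
    swap
    · rw [trajAux, dif_neg h, hatAux_succ_of_not_lt ξ h]
    rw [trajAux, dif_pos h, hatAux_succ_of_lt ξ h, ih (by omega),
      Finset.sum_congr rfl fun j hj => congrArg _ (hζ j hj ⟨t, by omega⟩ ht), lInput,
      hC.apply_eq_hatPolicy (fun _ _ => rfl) fun j hj τ (hτ : (τ : ℕ) ≤ t) =>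
        hζ j hj τ (by omega)]
    rfl

lemma lState_hatTraj (hC : S.LCausal Ψ) (ξ : S.NoiseAll) (i : Fin S.M) :
    S.lState Ψ i (ξ i) (S.hatTraj Ψ ξ) = S.hatTraj Ψ ξ i :=
  funext fun τ => lState_eq_hatTraj_of_le hC ξ (N := S.T) (fun _ _ _ _ => rfl) τ τ.is_le

lemma lInput_hatTraj (hC : S.LCausal Ψ) (ξ : S.NoiseAll) (i : Fin S.M) :
    S.lInput Ψ i (ξ i) (S.hatTraj Ψ ξ) = S.clInput (S.hatPolicy Ψ) ξ i :=
  funext fun _ => hC.apply_eq_hatPolicy (fun _ _ => rfl) fun _ _ _ _ => rfl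

lemma clState_hatPolicy (ξ : S.NoiseAll) (i : Fin S.M) :
    S.clState (S.hatPolicy Ψ) ξ i = S.hatTraj Ψ ξ i := by
  funext τ
  suffices ∀ t i, S.jointAux (fun i' t' => S.hatPolicy Ψ i' t' ξ) ξ t i = S.hatAux Ψ ξ t i from
    this τ i
  intro t
  induction t with
  | zero => exact fun i => (hatAux_zero ξ i).symm
  | succ t ih =>
    intro i
    by_cases h : t < S.T
    · simp only [jointAux, dif_pos h, ih, hatAux_succ_of_lt ξ h]
    · rw [jointAux, hatAux_succ_of_not_lt ξ h]
      exact dif_neg h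

variable {X : ∀ i : Fin S.M, Set (S.StateTraj i)}

lemma exists_beliefs_mem_eq_hatTraj_of_lt (hC : S.LCausal Ψ) (hX : ∀ i, (X i).Nonempty)
    (hcon : S.feasLcon Ψ X) {ξ : S.NoiseAll} (hξ : ξ ∈ S.XiM) (N : ℕ) :
    ∃ ζ : S.Beliefs, (∀ j, ζ j ∈ X j) ∧
      ∀ j (τ : Fin (S.T + 1)), (τ : ℕ) < N → ζ j τ = S.hatTraj Ψ ξ j τ := by
  induction N with
  | zero => exact ⟨fun j => (hX j).some, fun j => (hX j).some_mem, fun _ _ h => by omega⟩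
  | succ N ih =>
    obtain ⟨ζ, hζX, hζ⟩ := ih
    exact ⟨fun i => S.lState Ψ i (ξ i) ζ,
      fun i => (hcon i ζ (fun j _ => hζX j) (ξ i) (hξ i)).2,
      fun i τ hτ => lState_eq_hatTraj_of_le hC ξ (fun j _ => hζ j) τ (Nat.lt_succ_iff.mp hτ)⟩

lemma hatTraj_mem (hfeas : S.feasL Ψ X) {ξ : S.NoiseAll} (hξ : ξ ∈ S.XiM) (i : Fin S.M) :
    S.hatTraj Ψ ξ i ∈ X i := by
  obtain ⟨hC, hX, hcon⟩ := hfeas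
  obtain ⟨ζ, hζX, hζ⟩ :=
    exists_beliefs_mem_eq_hatTraj_of_lt hC (fun j => (hX j).1) hcon hξ (S.T + 1)
  have hζi : ζ i = S.hatTraj Ψ ξ i := funext fun τ => hζ i τ τ.is_lt
  exact hζi ▸ hζX i

lemma hatPolicy_feasPN (hfeas : S.feasL Ψ X) : S.feasPN (S.hatPolicy Ψ) := by
  refine ⟨hatPolicy_pnCausal hfeas.1, fun ξ hξ i => ?_⟩
  have hO := (hfeas.2.2 i _ (fun j _ => hatTraj_mem hfeas hξ j) (ξ i) (hξ i)).1
  rwa [lState_hatTraj hfeas.1, lInput_hatTraj hfeas.1, ← clState_hatPolicy] at hO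

lemma objPN_hatPolicy_le_objL (hfeas : S.feasL Ψ X) (ξ0 : S.NoiseAll) :
    S.objPN (S.hatPolicy Ψ) ξ0 ≤ S.objL Ψ X := by
  refine Finset.sum_le_sum fun i _ => sSup_le_sSup ?_
  rintro _ ⟨ξ, ⟨hξ, -⟩, rfl⟩
  refine ⟨(ξ i, S.hatTraj Ψ ξ), ⟨hξ i, fun j _ => hatTraj_mem hfeas hξ j⟩, ?_⟩
  simp only [lState_hatTraj hfeas.1, lInput_hatTraj hfeas.1, clState_hatPolicy]

end Sys

theorem local_to_partiallyNested_general (S : Sys) (Ψ : S.LPolicy)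
    (X : ∀ i : Fin S.M, Set (S.StateTraj i)) (hfeas : S.feasL Ψ X)
    (ξ0 : S.NoiseAll) :
    (∀ ξ ∈ S.XiM, ∀ i, S.hatTraj Ψ ξ i ∈ X i) ∧
    S.feasPN (S.hatPolicy Ψ) ∧
    (∑ i : Fin S.M,
      sSup ((fun ξ =>
          ((S.cost i (S.hatTraj Ψ ξ i) (fun t => S.hatPolicy Ψ i t ξ) : ℝ) : EReal)) ''
        {ξ | ξ ∈ S.XiM ∧ ∀ j ∉ S.Nbar i, ξ j = ξ0 j})) ≤ S.objL Ψ X := by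
  refine ⟨fun _ hξ => Sys.hatTraj_mem hfeas hξ, Sys.hatPolicy_feasPN hfeas, ?_⟩
  have hobj := Sys.objPN_hatPolicy_le_objL hfeas ξ0
  simp only [Sys.objPN, Sys.clState_hatPolicy] at hobj
  exact hobj

/-- Let `((Ψ_i)_i, (X_i)_i)` be a feasible pair of the local problem
`P_L` and let `χ̂` be the recursively defined closed-loop trajectories (`hatTraj`) and
`Φ̂` the induced partially nested policy (`hatPolicy`). Then:
(i) for every `ξ_{N̄_i} ∈ Ξ_{N̄_i}` (as coordinates of some `ξ ∈ Ξ_M`), the trajectory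
`χ̂_i` lies in `X_i`; (ii) `Φ̂` is feasible for the partially nested problem `P_PN`;
(iii) the objective value of `Φ̂` in `P_PN`, i.e.
`∑_i sup_{ξ_{N̄_i} ∈ Ξ_{N̄_i}} J_i(χ̂_i, Φ̂_i)` (the sup over `Ξ_{N̄_i}` encoded by
pinning coordinates outside `N̄_i` to a selection `ξ0 ∈ Ξ_M`), is at most the objective
value of `((Ψ_i)_i, (X_i)_i)` in `P_L`. -/
theorem local_to_partiallyNested (S : Sys) (Ψ : S.LPolicy)
    (X : ∀ i : Fin S.M, Set (S.StateTraj i)) (hfeas : S.feasL Ψ X)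
    (ξ0 : S.NoiseAll) (hξ0 : ξ0 ∈ S.XiM) :
    (∀ ξ ∈ S.XiM, ∀ i, S.hatTraj Ψ ξ i ∈ X i) ∧
    S.feasPN (S.hatPolicy Ψ) ∧
    (∑ i : Fin S.M,
      sSup ((fun ξ =>
          ((S.cost i (S.hatTraj Ψ ξ i) (fun t => S.hatPolicy Ψ i t ξ) : ℝ) : EReal)) ''
        {ξ | ξ ∈ S.XiM ∧ ∀ j ∉ S.Nbar i, ξ j = ξ0 j})) ≤ S.objL Ψ X :=
  local_to_partiallyNested_general S Ψ X hfeas ξ0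
end

section
/- The local problem is a conservative approximation of the partially nested problem in terms of optimal values: val(P_L) ≥ val(P_PN). -/
open scoped BigOperators

/-!
Given a feasible pair `(Ψ, X)` of the local problem, run all local policies simultaneously,
each agent using the true states of its neighbours as beliefs. Causality of `Ψ` makes this
closed loop well defined stage by stage, and an induction over the stages shows that its
trajectories lie in the forecast sets `X`: they are admissible beliefs, so the constraints of
`P_L` give robust feasibility and every realized cost of agent `i` is among the values over which
`P_L` takes its supremum. Because `N̄_i` is closed under taking neighbours, the input of agent `i`
at stage `t` depends only on the uncertainties of `N̄_i` before `t`, so the resulting policy is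
feasible for `P_PN`.
-/

namespace Sys

variable {S : Sys}

lemma Nbar_subset_of_mem {i j : Fin S.M} (hj : j ∈ S.Nbar i) : S.Nbar j ⊆ S.Nbar i := by
  classical
  -- these subsets of `N̄_i` satisfy the closure conditions, so minimality makes them all of `N̄_i`
  let P := fun i => {j ∈ S.Nbar i | S.Nbar j ⊆ S.Nbar i}
  have hP : ∀ i, S.Nbar i ⊆ P i :=
    S.Nbar_min P (fun i => Finset.mem_filter.mpr ⟨S.Nbar_self i, le_rfl⟩)
      fun a b hb k hk => by
        rw [Finset.mem_filter] at hk ⊢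
        exact ⟨S.Nbar_nested a b hb hk.1, hk.2.trans (S.Nbar_nested a b hb)⟩
  exact (Finset.mem_filter.mp (hP i hj)).2

lemma Nbr_subset_Nbar_of_mem {i j : Fin S.M} (hj : j ∈ S.Nbar i) : S.Nbr j ⊆ S.Nbar i :=
  fun k hk => Nbar_subset_of_mem hj (S.Nbar_nested j k hk (S.Nbar_self k))

variable (S) in
/-- `S.bel Ψ ξ t` coincides with the joint closed loop of `Ψ` at the stages `≤ t` and still
holds the initial states at the later ones; by causality, it is a legitimate belief argument for
the inputs of stage `t`. -/
noncomputable def bel (Ψ : S.LPolicy) (ξ : S.NoiseAll) : ℕ → S.Beliefs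
  | 0 => fun j _ => S.xinit j
  | (t+1) => fun j τ =>
      if h : τ.val = t + 1 ∧ t < S.T then
        (S.A j ⟨t, h.2⟩).mulVec (bel Ψ ξ t j ⟨t, Nat.lt_succ_of_lt h.2⟩)
        + ∑ k ∈ S.Nbr j, (S.B j ⟨t, h.2⟩ k).mulVec (bel Ψ ξ t k ⟨t, Nat.lt_succ_of_lt h.2⟩)
        + (S.D j ⟨t, h.2⟩).mulVec (Ψ j ⟨t, h.2⟩ (ξ j) (bel Ψ ξ t))
        + (S.E j ⟨t, h.2⟩).mulVec (ξ j ⟨t, h.2⟩)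
      else bel Ψ ξ t j τ

variable (S) in
noncomputable def liftPolicy (Ψ : S.LPolicy) : S.CPolicy :=
  fun i t ξ => Ψ i t (ξ i) (S.bel Ψ ξ t)

section bel

variable {Ψ : S.LPolicy} {ξ : S.NoiseAll}

lemma bel_apply_of_le {s t : ℕ} (hst : s ≤ t) (j : Fin S.M) {τ : Fin (S.T+1)}
    (hτ : τ.val ≤ s) : S.bel Ψ ξ t j τ = S.bel Ψ ξ s j τ := by
  induction t, hst using Nat.le_induction with
  | base => rfl
  | succ t hst ih =>
    rw [← ih]
    simp only [bel]
    exact dif_neg fun h => by omega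

lemma bel_apply_zero (t : ℕ) (j : Fin S.M) :
    S.bel Ψ ξ t j ⟨0, Nat.succ_pos _⟩ = S.xinit j :=
  bel_apply_of_le (Nat.zero_le t) j le_rfl

lemma clState_liftPolicy (i : Fin S.M) :
    S.clState (S.liftPolicy Ψ) ξ i = S.bel Ψ ξ S.T i := by
  suffices h : ∀ s (hs : s ≤ S.T) i, S.jointAux (fun i t => S.liftPolicy Ψ i t ξ) ξ s i
      = S.bel Ψ ξ s i ⟨s, Nat.lt_succ_of_le hs⟩ by
    funext τ
    have hτ : τ.val ≤ S.T := Nat.lt_succ_iff.mp τ.isLt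
    exact (h τ hτ i).trans (bel_apply_of_le hτ i le_rfl).symm
  intro s
  induction s with
  | zero => intro _ _; rfl
  | succ s ih =>
    intro hs i
    have hsT : s < S.T := hs
    simp only [jointAux, bel]
    rw [dif_pos hsT, dif_pos (by simp [hsT])]
    simp only [ih hsT.le]
    rfl

lemma clInput_liftPolicy (hC : S.LCausal Ψ) (i : Fin S.M) :
    S.clInput (S.liftPolicy Ψ) ξ i = S.lInput Ψ i (ξ i) (S.bel Ψ ξ S.T) := by
  funext t
  exact hC i t _ _ _ _ (fun _ _ => rfl)
    fun k _ τ hτ => (bel_apply_of_le t.isLt.le k hτ).symm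

/-- Beliefs that are correct before stage `t` already give the correct state at stage `t`,
since the dynamics at `t` only read the neighbour states at `t - 1`. -/
lemma lState_apply_eq_bel (hC : S.LCausal Ψ) (i : Fin S.M) {η : S.Beliefs} {t : ℕ}
    (hη : ∀ k (τ : Fin (S.T+1)), τ.val < t → η k τ = S.bel Ψ ξ S.T k τ)
    {τ : Fin (S.T+1)} (hτ : τ.val ≤ t) :
    S.lState Ψ i (ξ i) η τ = S.bel Ψ ξ S.T i τ := by
  suffices h : ∀ s (hs : s ≤ S.T), s ≤ t →
      S.trajAux i η (S.lInput Ψ i (ξ i) η) (ξ i) s = S.bel Ψ ξ S.T i ⟨s, Nat.lt_succ_of_le hs⟩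
    from h τ (Nat.lt_succ_iff.mp τ.isLt) hτ
  intro s
  induction s with
  | zero => intro _ _; exact (bel_apply_zero _ i).symm
  | succ s ih =>
    intro hs hst
    have hsT : s < S.T := hs
    have hη' : ∀ k (τ : Fin (S.T+1)), τ.val ≤ s → η k τ = S.bel Ψ ξ s k τ := fun k τ hτ =>
      (hη k τ (by omega)).trans (bel_apply_of_le hsT.le k hτ)
    have hinput : S.lInput Ψ i (ξ i) η ⟨s, hsT⟩ = Ψ i ⟨s, hsT⟩ (ξ i) (S.bel Ψ ξ s) :=
      hC i _ _ _ _ _ (fun _ _ => rfl) fun k _ τ hτ => hη' k τ hτ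
    rw [bel_apply_of_le hs i le_rfl]
    simp only [trajAux, bel]
    rw [dif_pos hsT, dif_pos (by simp [hsT]), hinput, ih hsT.le (by omega),
      ← bel_apply_of_le hsT.le i le_rfl]
    simp only [hη' _ ⟨s, _⟩ le_rfl]

lemma lState_bel (hC : S.LCausal Ψ) (i : Fin S.M) :
    S.lState Ψ i (ξ i) (S.bel Ψ ξ S.T) = S.bel Ψ ξ S.T i :=
  funext fun τ => lState_apply_eq_bel hC i (t := S.T + 1) (fun _ _ _ => rfl) τ.isLt.le

lemma bel_mem_of_feasL {X : ∀ i : Fin S.M, Set (S.StateTraj i)} (hF : S.feasL Ψ X)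
    (hξ : ξ ∈ S.XiM) (j : Fin S.M) : S.bel Ψ ξ S.T j ∈ X j := by
  obtain ⟨hC, hX, hcon⟩ := hF
  have agree : ∀ t, ∃ η : S.Beliefs, (∀ j, η j ∈ X j) ∧
      ∀ j (τ : Fin (S.T+1)), τ.val < t → η j τ = S.bel Ψ ξ S.T j τ := by
    intro t
    induction t with
    | zero =>
      choose η hη using fun j => (hX j).1
      exact ⟨η, hη, fun _ _ h => absurd h (Nat.not_lt_zero _)⟩
    | succ t ih =>
      obtain ⟨η, hηX, hη⟩ := ih
      exact ⟨fun j => S.lState Ψ j (ξ j) η, fun j => (hcon j η (fun k _ => hηX k) _ (hξ j)).2,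
        fun j τ hτ => lState_apply_eq_bel hC j hη (Nat.lt_succ_iff.mp hτ)⟩
  obtain ⟨η, hηX, hη⟩ := agree (S.T + 1)
  convert hηX j using 1
  exact funext fun τ => (hη j τ τ.isLt).symm

lemma bel_eq_of_noise_eq (hC : S.LCausal Ψ) {P : Finset (Fin S.M)}
    (hP : ∀ j ∈ P, S.Nbr j ⊆ P) {t : ℕ} {ξ' : S.NoiseAll}
    (hξ : ∀ j ∈ P, ∀ τ : Fin S.T, (τ : ℕ) < t → ξ j τ = ξ' j τ) :
    ∀ s ≤ t, ∀ j ∈ P, S.bel Ψ ξ s j = S.bel Ψ ξ' s j := by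
  intro s
  induction s with
  | zero => intro _ _ _; rfl
  | succ s ih =>
    intro hst j hj
    have ih' : ∀ k ∈ P, S.bel Ψ ξ s k = S.bel Ψ ξ' s k := ih (by omega)
    funext τ
    simp only [bel]
    split_ifs with h
    · have hinput : Ψ j ⟨s, h.2⟩ (ξ j) (S.bel Ψ ξ s) = Ψ j ⟨s, h.2⟩ (ξ' j) (S.bel Ψ ξ' s) :=
        hC j _ _ _ _ _ (fun τ hτ => hξ j hj τ (hτ.trans hst))
          fun k hk _ _ => by rw [ih' k (hP j hj hk)]
      rw [hinput, hξ j hj ⟨s, h.2⟩ hst, ih' j hj,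
        Finset.sum_congr rfl fun k hk => by rw [ih' k (hP j hj hk)]]
    · rw [ih' j hj]

end bel

lemma PNCausal_liftPolicy {Ψ : S.LPolicy} (hC : S.LCausal Ψ) : S.PNCausal (S.liftPolicy Ψ) :=
  fun i t _ _ hξ => hC i t _ _ _ _ (fun τ hτ => hξ i (S.Nbar_self i) τ hτ)
    fun k hk _ _ => by
      rw [bel_eq_of_noise_eq hC (fun _ => Nbr_subset_Nbar_of_mem) hξ t le_rfl k
        (Nbr_subset_Nbar_of_mem (S.Nbar_self i) hk)]

lemma feasPN_liftPolicy {Ψ : S.LPolicy} {X : ∀ i : Fin S.M, Set (S.StateTraj i)}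
    (hF : S.feasL Ψ X) : S.feasPN (S.liftPolicy Ψ) := by
  refine ⟨PNCausal_liftPolicy hF.1, fun ξ hξ i => ?_⟩
  rw [clState_liftPolicy, clInput_liftPolicy hF.1, ← lState_bel hF.1]
  exact (hF.2.2 i _ (fun k _ => bel_mem_of_feasL hF hξ k) (ξ i) (hξ i)).1

lemma objPN_le_objC (Φ : S.CPolicy) (ξ0 : S.NoiseAll) : S.objPN Φ ξ0 ≤ S.objC Φ :=
  Finset.sum_le_sum fun _ _ => sSup_le_sSup (Set.image_mono fun _ h => h.1)

lemma objC_liftPolicy_le_objL {Ψ : S.LPolicy} {X : ∀ i : Fin S.M, Set (S.StateTraj i)}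
    (hF : S.feasL Ψ X) : S.objC (S.liftPolicy Ψ) ≤ S.objL Ψ X := by
  refine Finset.sum_le_sum fun i _ => sSup_le_sSup ?_
  rintro _ ⟨ξ, hξ, rfl⟩
  refine ⟨(ξ i, S.bel Ψ ξ S.T), ⟨hξ i, fun k _ => bel_mem_of_feasL hF hξ k⟩, ?_⟩
  simp only [clState_liftPolicy, clInput_liftPolicy hF.1, lState_bel hF.1]

end Sys

theorem valL_ge_valPN_general (S : Sys) (ξ0 : S.NoiseAll) :
    S.valPN ξ0 ≤ S.valL := by
  refine le_sInf ?_
  rintro _ ⟨Ψ, X, hF, rfl⟩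
  calc S.valPN ξ0 ≤ S.objPN (S.liftPolicy Ψ) ξ0 := sInf_le ⟨_, Sys.feasPN_liftPolicy hF, rfl⟩
    _ ≤ S.objC (S.liftPolicy Ψ) := Sys.objPN_le_objC _ ξ0
    _ ≤ S.objL Ψ X := Sys.objC_liftPolicy_le_objL hF

/-- The local problem is a conservative approximation of the
partially nested problem in terms of optimal values: `val(P_L) ≥ val(P_PN)` (for any
selection `ξ0 ∈ Ξ_M` used to encode the restricted suprema of `P_PN`). -/
theorem valL_ge_valPN (S : Sys) (ξ0 : S.NoiseAll) (hξ0 : ξ0 ∈ S.XiM) :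
    S.valPN ξ0 ≤ S.valL :=
  valL_ge_valPN_general S ξ0
end

section
/- The local problem is a conservative approximation of the centralized problem in terms of optimal values: val(P_L) ≥ val(P_C). -/
open scoped BigOperators

/-!
Given a feasible local solution `(Ψ, X)` and a disturbance `ξ`, consider the belief map
`ζ ↦ (f_j(ζ_{N_j}, Ψ_j(ξ_j, ζ_{N_j}), ξ_j))_j`. Since `Ψ_{j,t}` reads beliefs only up to time `t`,
each application of the map fixes one more time step, so `T + 1` iterations from any
`ζ₀ ∈ ∏ X_j` reach a fixed point. This fixed point is the joint closed-loop trajectory, stays in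
`∏ X_j` because the local constraints make `∏ X_j` invariant, and depends on `ξ` only causally.
Feeding it to `Ψ` yields a centralized policy that is feasible for `P_C`, whose worst-case cost
for agent `i` is one of the values over which the local objective takes its supremum.
-/

open Function Set

def AgreeBefore {ι : Type*} {β : ι → Type*} {n : ℕ} (m : ℕ) (f g : ∀ i, Fin n → β i) : Prop :=
  ∀ i (τ : Fin n), (τ : ℕ) < m → f i τ = g i τ

theorem AgreeBefore.mono {ι : Type*} {β : ι → Type*} {n m m' : ℕ} {f g : ∀ i, Fin n → β i}
    (h : AgreeBefore m f g) (hm : m' ≤ m) : AgreeBefore m' f g :=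
  fun i τ hτ => h i τ (by omega)

namespace Sys

noncomputable def beliefMap (S : Sys) (Ψ : S.LPolicy) (ξ : S.NoiseAll) (ζ : S.Beliefs) :
    S.Beliefs :=
  fun j => S.lState Ψ j (ξ j) ζ

noncomputable def fixedBelief (S : Sys) (Ψ : S.LPolicy) (ζ₀ : S.Beliefs) (ξ : S.NoiseAll) :
    S.Beliefs :=
  (S.beliefMap Ψ ξ)^[S.T + 1] ζ₀

noncomputable def centralPolicy (S : Sys) (Ψ : S.LPolicy) (ζ₀ : S.Beliefs) : S.CPolicy :=
  fun i t ξ => Ψ i t (ξ i) (S.fixedBelief Ψ ζ₀ ξ)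

variable {S : Sys} {Ψ : S.LPolicy}

theorem trajAux_congr {i : Fin S.M} {ζ ζ' : S.Beliefs} {u u' : S.InputTraj i}
    {ξ ξ' : S.NoiseTraj i} {m : ℕ}
    (hζ : ∀ j ∈ S.Nbr i, ∀ τ : Fin (S.T + 1), (τ : ℕ) < m → ζ j τ = ζ' j τ)
    (hu : ∀ t : Fin S.T, (t : ℕ) < m → u t = u' t)
    (hξ : ∀ t : Fin S.T, (t : ℕ) < m → ξ t = ξ' t) :
    ∀ s ≤ m, S.trajAux i ζ u ξ s = S.trajAux i ζ' u' ξ' s := by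
  intro s hs
  induction s with
  | zero => rfl
  | succ s ih =>
    have hsm : s < m := by omega
    simp only [trajAux]
    split_ifs with h
    · rw [ih (by omega), hu _ hsm, hξ _ hsm,
        Finset.sum_congr rfl fun j hj => by rw [hζ j hj _ hsm]]
    · rfl

theorem beliefMap_agreeBefore_succ (hΨ : S.LCausal Ψ) {ξ ξ' : S.NoiseAll} {ζ ζ' : S.Beliefs}
    {m : ℕ} (hζ : AgreeBefore m ζ ζ') (hξ : AgreeBefore m ξ ξ') :
    AgreeBefore (m + 1) (S.beliefMap Ψ ξ ζ) (S.beliefMap Ψ ξ' ζ') := by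
  intro j τ hτ
  have hu : ∀ t : Fin S.T, (t : ℕ) < m → Ψ j t (ξ j) ζ = Ψ j t (ξ' j) ζ' := fun t ht =>
    hΨ j t _ _ _ _ (fun τ' h => hξ j τ' (by omega)) (fun k _ τ' h => hζ k τ' (by omega))
  exact trajAux_congr (fun k _ => hζ k) hu (hξ j) τ (by omega)

theorem beliefMap_iterate_agreeBefore_iterate (hΨ : S.LCausal Ψ) (ξ : S.NoiseAll)
    (ζ₀ : S.Beliefs) (k : ℕ) :
    AgreeBefore k (S.beliefMap Ψ ξ ((S.beliefMap Ψ ξ)^[k] ζ₀)) ((S.beliefMap Ψ ξ)^[k] ζ₀) := by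
  induction k with
  | zero => intro _ _ h; omega
  | succ k ih =>
    rw [iterate_succ_apply']
    exact beliefMap_agreeBefore_succ hΨ ih fun _ _ _ => rfl

theorem iterate_beliefMap_agreeBefore (hΨ : S.LCausal Ψ) (ζ₀ : S.Beliefs)
    {ξ ξ' : S.NoiseAll} {n : ℕ} (hξ : AgreeBefore n ξ ξ') (k : ℕ) :
    AgreeBefore (min k n + 1) ((S.beliefMap Ψ ξ)^[k] ζ₀) ((S.beliefMap Ψ ξ')^[k] ζ₀) := by
  induction k with
  | zero => exact fun _ _ _ => rfl
  | succ k ih =>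
    rw [iterate_succ_apply', iterate_succ_apply']
    exact beliefMap_agreeBefore_succ hΨ (ih.mono (by omega)) (hξ.mono (by omega))

theorem isFixedPt_fixedBelief (hΨ : S.LCausal Ψ) (ζ₀ : S.Beliefs) (ξ : S.NoiseAll) :
    IsFixedPt (S.beliefMap Ψ ξ) (S.fixedBelief Ψ ζ₀ ξ) := by
  funext j τ
  exact beliefMap_iterate_agreeBefore_iterate hΨ ξ ζ₀ (S.T + 1) j τ τ.isLt

theorem mapsTo_beliefMap {X : ∀ i : Fin S.M, Set (S.StateTraj i)} (hX : S.feasLcon Ψ X)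
    {ξ : S.NoiseAll} (hξ : ξ ∈ S.XiM) :
    MapsTo (S.beliefMap Ψ ξ) {ζ | ∀ j, ζ j ∈ X j} {ζ | ∀ j, ζ j ∈ X j} :=
  fun _ hζ j => (hX j _ (fun k _ => hζ k) (ξ j) (hξ j)).2

theorem fixedBelief_mem {X : ∀ i : Fin S.M, Set (S.StateTraj i)} (hX : S.feasLcon Ψ X)
    {ζ₀ : S.Beliefs} (hζ₀ : ∀ j, ζ₀ j ∈ X j) {ξ : S.NoiseAll} (hξ : ξ ∈ S.XiM) (j : Fin S.M) :
    S.fixedBelief Ψ ζ₀ ξ j ∈ X j :=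
  (mapsTo_beliefMap hX hξ).iterate (S.T + 1) hζ₀ j

theorem jointAux_eq_trajAux_of_isFixedPt {ξ : S.NoiseAll} {ζ : S.Beliefs}
    (hζ : IsFixedPt (S.beliefMap Ψ ξ) ζ) (s : ℕ) (i : Fin S.M) :
    S.jointAux (fun i t => Ψ i t (ξ i) ζ) ξ s i
      = S.trajAux i ζ (S.lInput Ψ i (ξ i) ζ) (ξ i) s := by
  induction s generalizing i with
  | zero => rfl
  | succ s ih =>
    simp only [jointAux, trajAux]
    split_ifs with h
    · have hnbr : ∀ j, S.jointAux (fun i t => Ψ i t (ξ i) ζ) ξ s j = ζ j ⟨s, by omega⟩ :=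
        fun j => (ih j).trans (congrFun (congrFun hζ j) ⟨s, by omega⟩)
      rw [ih i]
      simp only [hnbr]
      rfl
    · rfl

theorem clInput_centralPolicy (ζ₀ : S.Beliefs) (ξ : S.NoiseAll) (i : Fin S.M) :
    S.clInput (S.centralPolicy Ψ ζ₀) ξ i = S.lInput Ψ i (ξ i) (S.fixedBelief Ψ ζ₀ ξ) :=
  rfl

theorem clState_centralPolicy (hΨ : S.LCausal Ψ) (ζ₀ : S.Beliefs) (ξ : S.NoiseAll)
    (i : Fin S.M) :
    S.clState (S.centralPolicy Ψ ζ₀) ξ i = S.lState Ψ i (ξ i) (S.fixedBelief Ψ ζ₀ ξ) :=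
  funext fun τ => jointAux_eq_trajAux_of_isFixedPt (isFixedPt_fixedBelief hΨ ζ₀ ξ) τ i

theorem cCausal_centralPolicy (hΨ : S.LCausal Ψ) (ζ₀ : S.Beliefs) :
    S.CCausal (S.centralPolicy Ψ ζ₀) := by
  intro i t ξ ξ' hξ
  refine hΨ i t _ _ _ _ (hξ i) fun j _ τ hτ => ?_
  have := t.isLt
  exact iterate_beliefMap_agreeBefore hΨ ζ₀ hξ (S.T + 1) j τ (by omega)

theorem feasC_centralPolicy {X : ∀ i : Fin S.M, Set (S.StateTraj i)} (hΨ : S.LCausal Ψ)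
    (hX : S.feasLcon Ψ X) {ζ₀ : S.Beliefs} (hζ₀ : ∀ j, ζ₀ j ∈ X j) :
    S.feasC (S.centralPolicy Ψ ζ₀) := by
  refine ⟨cCausal_centralPolicy hΨ ζ₀, fun ξ hξ i => ?_⟩
  rw [clState_centralPolicy hΨ, clInput_centralPolicy]
  exact (hX i _ (fun j _ => fixedBelief_mem hX hζ₀ hξ j) (ξ i) (hξ i)).1

theorem objC_centralPolicy_le {X : ∀ i : Fin S.M, Set (S.StateTraj i)} (hΨ : S.LCausal Ψ)
    (hX : S.feasLcon Ψ X) {ζ₀ : S.Beliefs} (hζ₀ : ∀ j, ζ₀ j ∈ X j) :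
    S.objC (S.centralPolicy Ψ ζ₀) ≤ S.objL Ψ X := by
  refine Finset.sum_le_sum fun i _ => sSup_le_sSup ?_
  rintro _ ⟨ξ, hξ, rfl⟩
  refine ⟨(ξ i, S.fixedBelief Ψ ζ₀ ξ), ⟨hξ i, fun j _ => fixedBelief_mem hX hζ₀ hξ j⟩, ?_⟩
  simp only [clState_centralPolicy hΨ, clInput_centralPolicy]

end Sys

/-- The local problem is a conservative approximation of the
centralized problem in terms of optimal values: `val(P_L) ≥ val(P_C)`. -/
theorem valL_ge_valC (S : Sys) : S.valC ≤ S.valL := by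
  refine le_sInf ?_
  rintro _ ⟨Ψ, X, ⟨hΨ, hXne, hX⟩, rfl⟩
  choose ζ₀ hζ₀ using fun j => (hXne j).1
  calc S.valC ≤ S.objC (S.centralPolicy Ψ ζ₀) := sInf_le ⟨_, Sys.feasC_centralPolicy hΨ hX hζ₀, rfl⟩
    _ ≤ S.objL Ψ X := Sys.objC_centralPolicy_le hΨ hX hζ₀
end

section
/- Let ((Γ_i)_i,(Y_i,z_i)_i) be a feasible solution of the auxiliary-uncertainty problem P_S, and for each j define the stagewise map L_j(ζ_j) := Y_j^{−1}(ζ_j − z_j) on X_j(Y_j,z_j) (the inverse exists since the stage blocks Y_{j,t} are positive definite). Then the solution ((Ψ_i)_i,(Y_i,z_i)_i) defined by Ψ_{i,t}(ξ_i^{t−1}, ζ_{N_i}^t) := Γ_{i,t}(ξ_i^{t−1}, [L_j(ζ_j)^t]_{j∈N_i}) is feasible for the affinely restricted problem P_AT and attains the same objective value: Σ_{i=1}^M sup_{ξ_i∈Ξ_i, ζ_{N_i}∈∏_{j∈N_i}X_j(Y_j,z_j)} J_i equals Σ_{i=1}^M sup_{ξ_i∈Ξ_i, s_{N_i}∈S_{N_i}}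 J_i for the original solution. -/
open scoped BigOperators

namespace Sys

variable (S : Sys)

/-- The fixed primitive set `S_i = {s : g_i − G_i s ∈ K_i}` (as a set of state
trajectories of agent `i`). -/
def SsetOf (ℓ : Fin S.M → ℕ) (K : ∀ i : Fin S.M, Set (Fin (ℓ i) → ℝ))
    (G : ∀ i : Fin S.M, Matrix (Fin (ℓ i)) (Fin (S.T+1) × Fin (S.nx i)) ℝ)
    (g : ∀ i : Fin S.M, Fin (ℓ i) → ℝ) (i : Fin S.M) : Set (S.StateTraj i) :=
  {s | (fun r => g i r - ∑ p : Fin (S.T+1) × Fin (S.nx i), G i r p * s p.1 p.2) ∈ K i}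

/-- The affinely transformed state-forecast set
`X_i(Y_i, z_i) = {Y_i s + z_i : s ∈ S_i}` with block-diagonal (stagewise) `Y_i`. -/
def XAT (ℓ : Fin S.M → ℕ) (K : ∀ i : Fin S.M, Set (Fin (ℓ i) → ℝ))
    (G : ∀ i : Fin S.M, Matrix (Fin (ℓ i)) (Fin (S.T+1) × Fin (S.nx i)) ℝ)
    (g : ∀ i : Fin S.M, Fin (ℓ i) → ℝ)
    (Y : ∀ i : Fin S.M, Fin (S.T+1) → Matrix (Fin (S.nx i)) (Fin (S.nx i)) ℝ)
    (z : ∀ i : Fin S.M, S.StateTraj i) (i : Fin S.M) : Set (S.StateTraj i) :=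
  {x | ∃ s ∈ S.SsetOf ℓ K G g i, ∀ t, x t = (Y i t).mulVec (s t) + z i t}

/-- Feasibility for the affinely restricted problem `P_AT`: causal local policies,
positive definite stage blocks `Y_{i,t}`, and the robust constraints of `P_L` with the
state-forecast sets `X_i(Y_i, z_i)`. -/
def feasAT (ℓ : Fin S.M → ℕ) (K : ∀ i : Fin S.M, Set (Fin (ℓ i) → ℝ))
    (G : ∀ i : Fin S.M, Matrix (Fin (ℓ i)) (Fin (S.T+1) × Fin (S.nx i)) ℝ)
    (g : ∀ i : Fin S.M, Fin (ℓ i) → ℝ)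
    (Y : ∀ i : Fin S.M, Fin (S.T+1) → Matrix (Fin (S.nx i)) (Fin (S.nx i)) ℝ)
    (z : ∀ i : Fin S.M, S.StateTraj i) (Ψ : S.LPolicy) : Prop :=
  S.LCausal Ψ ∧ (∀ i t, (Y i t).PosDef) ∧ S.feasLcon Ψ (fun i => S.XAT ℓ K G g Y z i)

/-- Optimal value of `P_AT`. -/
noncomputable def valAT (ℓ : Fin S.M → ℕ) (K : ∀ i : Fin S.M, Set (Fin (ℓ i) → ℝ))
    (G : ∀ i : Fin S.M, Matrix (Fin (ℓ i)) (Fin (S.T+1) × Fin (S.nx i)) ℝ)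
    (g : ∀ i : Fin S.M, Fin (ℓ i) → ℝ) : EReal :=
  sInf {v : EReal | ∃ (Ψ : S.LPolicy)
    (Y : ∀ i : Fin S.M, Fin (S.T+1) → Matrix (Fin (S.nx i)) (Fin (S.nx i)) ℝ)
    (z : ∀ i : Fin S.M, S.StateTraj i),
    S.feasAT ℓ K G g Y z Ψ ∧ v = S.objL Ψ (fun i => S.XAT ℓ K G g Y z i)}

/-- The stagewise affine map `R_j(s_j) = Y_j s_j + z_j`. -/
noncomputable def Rmap (Y : ∀ i : Fin S.M, Fin (S.T+1) → Matrix (Fin (S.nx i)) (Fin (S.nx i)) ℝ)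
    (z : ∀ i : Fin S.M, S.StateTraj i) (j : Fin S.M) (s : S.StateTraj j) : S.StateTraj j :=
  fun t => (Y j t).mulVec (s t) + z j t

/-- The stagewise inverse map `L_j(ζ_j) = Y_j⁻¹ (ζ_j − z_j)`. -/
noncomputable def Lmap (Y : ∀ i : Fin S.M, Fin (S.T+1) → Matrix (Fin (S.nx i)) (Fin (S.nx i)) ℝ)
    (z : ∀ i : Fin S.M, S.StateTraj i) (j : Fin S.M) (ζ : S.StateTraj j) : S.StateTraj j :=
  fun t => (Y j t)⁻¹.mulVec (ζ t - z j t)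

/-- The auxiliary-uncertainty constraint set `S_{N_i} = ∏_{j ∈ N_i} S_j`. -/
def SBelSet (ℓ : Fin S.M → ℕ) (K : ∀ i : Fin S.M, Set (Fin (ℓ i) → ℝ))
    (G : ∀ i : Fin S.M, Matrix (Fin (ℓ i)) (Fin (S.T+1) × Fin (S.nx i)) ℝ)
    (g : ∀ i : Fin S.M, Fin (ℓ i) → ℝ) (i : Fin S.M) : Set S.Beliefs :=
  {s | ∀ j ∈ S.Nbr i, s j ∈ S.SsetOf ℓ K G g j}

/-- Closed-loop state in the auxiliary-uncertainty problem `P_S`: the beliefs are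
`ζ_j = Y_j s_j + z_j` and the inputs are `Γ_{i,t}(ξ_i^{t-1}, s_{N_i}^t)`. -/
noncomputable def psState
    (Y : ∀ i : Fin S.M, Fin (S.T+1) → Matrix (Fin (S.nx i)) (Fin (S.nx i)) ℝ)
    (z : ∀ i : Fin S.M, S.StateTraj i) (Γ : S.LPolicy) (i : Fin S.M)
    (ξ : S.NoiseTraj i) (s : S.Beliefs) : S.StateTraj i :=
  S.traj i (fun j => S.Rmap Y z j (s j)) (fun t => Γ i t ξ s) ξ

/-- Feasibility for the auxiliary-uncertainty problem `P_S`. -/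
def feasPS (ℓ : Fin S.M → ℕ) (K : ∀ i : Fin S.M, Set (Fin (ℓ i) → ℝ))
    (G : ∀ i : Fin S.M, Matrix (Fin (ℓ i)) (Fin (S.T+1) × Fin (S.nx i)) ℝ)
    (g : ∀ i : Fin S.M, Fin (ℓ i) → ℝ)
    (Y : ∀ i : Fin S.M, Fin (S.T+1) → Matrix (Fin (S.nx i)) (Fin (S.nx i)) ℝ)
    (z : ∀ i : Fin S.M, S.StateTraj i) (Γ : S.LPolicy) : Prop :=
  S.LCausal Γ ∧ (∀ i t, (Y i t).PosDef) ∧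
  ∀ i, ∀ s ∈ S.SBelSet ℓ K G g i, ∀ ξ ∈ S.Xi i,
    S.InO i (S.psState Y z Γ i ξ s) (fun t => Γ i t ξ s) ∧
    S.psState Y z Γ i ξ s ∈ S.XAT ℓ K G g Y z i

/-- Objective of `P_S`: `∑_i sup_{ξ_i ∈ Ξ_i, s_{N_i} ∈ S_{N_i}} J_i`. -/
noncomputable def objPS (ℓ : Fin S.M → ℕ) (K : ∀ i : Fin S.M, Set (Fin (ℓ i) → ℝ))
    (G : ∀ i : Fin S.M, Matrix (Fin (ℓ i)) (Fin (S.T+1) × Fin (S.nx i)) ℝ)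
    (g : ∀ i : Fin S.M, Fin (ℓ i) → ℝ)
    (Y : ∀ i : Fin S.M, Fin (S.T+1) → Matrix (Fin (S.nx i)) (Fin (S.nx i)) ℝ)
    (z : ∀ i : Fin S.M, S.StateTraj i) (Γ : S.LPolicy) : EReal :=
  ∑ i : Fin S.M,
    sSup ((fun p : S.NoiseTraj i × S.Beliefs =>
        ((S.cost i (S.psState Y z Γ i p.1 p.2) (fun t => Γ i t p.1 p.2) : ℝ) : EReal)) ''
      {p | p.1 ∈ S.Xi i ∧ p.2 ∈ S.SBelSet ℓ K G g i})

/-- Optimal value of `P_S`. -/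
noncomputable def valPS (ℓ : Fin S.M → ℕ) (K : ∀ i : Fin S.M, Set (Fin (ℓ i) → ℝ))
    (G : ∀ i : Fin S.M, Matrix (Fin (ℓ i)) (Fin (S.T+1) × Fin (S.nx i)) ℝ)
    (g : ∀ i : Fin S.M, Fin (ℓ i) → ℝ) : EReal :=
  sInf {v : EReal | ∃ (Γ : S.LPolicy)
    (Y : ∀ i : Fin S.M, Fin (S.T+1) → Matrix (Fin (S.nx i)) (Fin (S.nx i)) ℝ)
    (z : ∀ i : Fin S.M, S.StateTraj i),
    S.feasPS ℓ K G g Y z Γ ∧ v = S.objPS ℓ K G g Y z Γ}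

end Sys

/-! The map `s ↦ Y s + z` acts stagewise and, the blocks `Y_{j,t}` being invertible, is a
bijection of `S_j` onto `X_j(Y_j, z_j)` with inverse `L_j`. Because it acts stagewise,
precomposing `Γ` with `L` keeps the policy causal, and at the belief `ζ = Y s + z` the closed
loop of the new policy is exactly the closed loop of `Γ` at `s`. Hence the robust constraints
and the suprema of the two problems range over the same closed-loop trajectories. -/

namespace Sys

variable {S : Sys} {ℓ : Fin S.M → ℕ} {K : ∀ i : Fin S.M, Set (Fin (ℓ i) → ℝ)}
  {G : ∀ i : Fin S.M, Matrix (Fin (ℓ i)) (Fin (S.T+1) × Fin (S.nx i)) ℝ}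
  {g : ∀ i : Fin S.M, Fin (ℓ i) → ℝ}
  {Y : ∀ i : Fin S.M, Fin (S.T+1) → Matrix (Fin (S.nx i)) (Fin (S.nx i)) ℝ}
  {z : ∀ i : Fin S.M, S.StateTraj i}

theorem Rmap_Lmap {j : Fin S.M} (hY : ∀ t, IsUnit (Y j t)) (ζ : S.StateTraj j) :
    S.Rmap Y z j (S.Lmap Y z j ζ) = ζ := by
  funext t
  simp only [Rmap, Lmap, Matrix.mulVec_mulVec,
    Matrix.mul_nonsing_inv _ ((Matrix.isUnit_iff_isUnit_det _).mp (hY t)), Matrix.one_mulVec,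
    sub_add_cancel]

theorem Lmap_Rmap {j : Fin S.M} (hY : ∀ t, IsUnit (Y j t)) (s : S.StateTraj j) :
    S.Lmap Y z j (S.Rmap Y z j s) = s := by
  funext t
  simp only [Lmap, Rmap, add_sub_cancel_right, Matrix.mulVec_mulVec,
    Matrix.nonsing_inv_mul _ ((Matrix.isUnit_iff_isUnit_det _).mp (hY t)), Matrix.one_mulVec]

theorem XAT_eq_image_Rmap (i : Fin S.M) :
    S.XAT ℓ K G g Y z i = S.Rmap Y z i '' S.SsetOf ℓ K G g i := by
  ext x
  simp only [XAT, Set.mem_image, Rmap, funext_iff]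
  exact exists_congr fun s => and_congr_right fun _ => forall₂_congr fun _ _ => eq_comm

theorem BelSet_XAT_eq_image_Rmap (hY : ∀ i t, IsUnit (Y i t)) (i : Fin S.M) :
    S.BelSet (fun i => S.XAT ℓ K G g Y z i) i =
      (fun s j => S.Rmap Y z j (s j)) '' S.SBelSet ℓ K G g i := by
  ext ζ
  constructor
  · intro hζ
    refine ⟨fun j => S.Lmap Y z j (ζ j), fun j hj => ?_, funext fun j => Rmap_Lmap (hY j) _⟩
    obtain ⟨s, hs, hsζ⟩ : ζ j ∈ S.Rmap Y z j '' S.SsetOf ℓ K G g j :=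
      XAT_eq_image_Rmap (K := K) j ▸ hζ j hj
    show S.Lmap Y z j (ζ j) ∈ _
    rwa [← hsζ, Lmap_Rmap (hY j)]
  · rintro ⟨s, hs, rfl⟩ j hj
    show S.Rmap Y z j (s j) ∈ S.XAT ℓ K G g Y z j
    rw [XAT_eq_image_Rmap]
    exact Set.mem_image_of_mem _ (hs j hj)

theorem LCausal.comp_Lmap {Γ : S.LPolicy} (hΓ : S.LCausal Γ) :
    S.LCausal (fun i t ξ ζ => Γ i t ξ (fun j => S.Lmap Y z j (ζ j))) :=
  fun i t _ _ _ _ hξ hζ =>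
    hΓ i t _ _ _ _ hξ fun j hj τ hτ => by simp only [Lmap, hζ j hj τ hτ]

section ClosedLoop

variable (Γ : S.LPolicy) (hY : ∀ i t, IsUnit (Y i t)) (i : Fin S.M) (ξ : S.NoiseTraj i)
  (s : S.Beliefs)
include hY

theorem lInput_comp_Lmap_Rmap :
    S.lInput (fun i t ξ ζ => Γ i t ξ (fun j => S.Lmap Y z j (ζ j))) i ξ
      (fun j => S.Rmap Y z j (s j)) = fun t => Γ i t ξ s := by
  funext t
  simp only [lInput, Lmap_Rmap (hY _)]

theorem lState_comp_Lmap_Rmap :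
    S.lState (fun i t ξ ζ => Γ i t ξ (fun j => S.Lmap Y z j (ζ j))) i ξ
      (fun j => S.Rmap Y z j (s j)) = S.psState Y z Γ i ξ s := by
  rw [lState, lInput_comp_Lmap_Rmap Γ hY]
  rfl

theorem feasLcon_comp_Lmap
    (hcon : ∀ i, ∀ s ∈ S.SBelSet ℓ K G g i, ∀ ξ ∈ S.Xi i,
      S.InO i (S.psState Y z Γ i ξ s) (fun t => Γ i t ξ s) ∧
        S.psState Y z Γ i ξ s ∈ S.XAT ℓ K G g Y z i) :
    S.feasLcon (fun i t ξ ζ => Γ i t ξ (fun j => S.Lmap Y z j (ζ j)))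
      (fun i => S.XAT ℓ K G g Y z i) := by
  intro i ζ hζ ξ hξ
  rw [BelSet_XAT_eq_image_Rmap hY] at hζ
  obtain ⟨s, hs, rfl⟩ := hζ
  rw [lState_comp_Lmap_Rmap Γ hY, lInput_comp_Lmap_Rmap Γ hY]
  exact hcon i s hs ξ hξ

theorem objL_comp_Lmap :
    S.objL (fun i t ξ ζ => Γ i t ξ (fun j => S.Lmap Y z j (ζ j)))
      (fun i => S.XAT ℓ K G g Y z i) = S.objPS ℓ K G g Y z Γ := by
  refine Finset.sum_congr rfl fun i _ => ?_
  have hdom : {p : S.NoiseTraj i × S.Beliefs |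
      p.1 ∈ S.Xi i ∧ p.2 ∈ S.BelSet (fun i => S.XAT ℓ K G g Y z i) i} =
      Prod.map id (fun s j => S.Rmap Y z j (s j)) '' (S.Xi i ×ˢ S.SBelSet ℓ K G g i) := by
    rw [Set.prodMap_image_prod, Set.image_id, ← BelSet_XAT_eq_image_Rmap hY]
    rfl
  rw [hdom, Set.image_image]
  simp only [Prod.map_fst, Prod.map_snd, id_eq, lState_comp_Lmap_Rmap Γ hY,
    lInput_comp_Lmap_Rmap Γ hY]
  rfl

end ClosedLoop

end Sys

theorem auxUncertainty_to_affineRestriction_general (S : Sys)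
    (ℓ : Fin S.M → ℕ) (K : ∀ i : Fin S.M, Set (Fin (ℓ i) → ℝ))
    (G : ∀ i : Fin S.M, Matrix (Fin (ℓ i)) (Fin (S.T+1) × Fin (S.nx i)) ℝ)
    (g : ∀ i : Fin S.M, Fin (ℓ i) → ℝ)
    (Γ : S.LPolicy)
    (Y : ∀ i : Fin S.M, Fin (S.T+1) → Matrix (Fin (S.nx i)) (Fin (S.nx i)) ℝ)
    (z : ∀ i : Fin S.M, S.StateTraj i)
    (hfeas : S.feasPS ℓ K G g Y z Γ) :
    S.feasAT ℓ K G g Y z (fun i t ξ ζ => Γ i t ξ (fun j => S.Lmap Y z j (ζ j))) ∧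
    S.objL (fun i t ξ ζ => Γ i t ξ (fun j => S.Lmap Y z j (ζ j)))
        (fun i => S.XAT ℓ K G g Y z i)
      = S.objPS ℓ K G g Y z Γ := by
  obtain ⟨hΓ, hY, hcon⟩ := hfeas
  have hYu : ∀ i t, IsUnit (Y i t) := fun i t => (hY i t).isUnit
  exact ⟨⟨hΓ.comp_Lmap, hY, Sys.feasLcon_comp_Lmap Γ hYu hcon⟩, Sys.objL_comp_Lmap Γ hYu⟩

/-- Let `((Γ_i)_i, (Y_i, z_i)_i)` be a feasible solution of the
auxiliary-uncertainty problem `P_S`, and for each `j` let `L_j(ζ_j) = Y_j⁻¹ (ζ_j − z_j)`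
(stagewise; the inverse exists since the stage blocks are positive definite). Then the
solution `((Ψ_i)_i, (Y_i, z_i)_i)` with `Ψ_{i,t}(ξ_i^{t-1}, ζ_{N_i}^t) :=
Γ_{i,t}(ξ_i^{t-1}, [L_j(ζ_j)^t]_{j ∈ N_i})` is feasible for the affinely restricted
problem `P_AT` and attains the same objective value. -/
theorem auxUncertainty_to_affineRestriction (S : Sys)
    (ℓ : Fin S.M → ℕ) (K : ∀ i : Fin S.M, Set (Fin (ℓ i) → ℝ))
    (hKclosed : ∀ i, IsClosed (K i)) (hKconvex : ∀ i, Convex ℝ (K i))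
    (hKadd : ∀ i, ∀ a ∈ K i, ∀ b ∈ K i, a + b ∈ K i)
    (hKsmul : ∀ i, ∀ c : ℝ, 0 ≤ c → ∀ a ∈ K i, c • a ∈ K i)
    (G : ∀ i : Fin S.M, Matrix (Fin (ℓ i)) (Fin (S.T+1) × Fin (S.nx i)) ℝ)
    (g : ∀ i : Fin S.M, Fin (ℓ i) → ℝ)
    (hSne : ∀ i, (S.SsetOf ℓ K G g i).Nonempty)
    (hSconvex : ∀ i, Convex ℝ (S.SsetOf ℓ K G g i))
    (hScompact : ∀ i, IsCompact (S.SsetOf ℓ K G g i))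
    (Γ : S.LPolicy)
    (Y : ∀ i : Fin S.M, Fin (S.T+1) → Matrix (Fin (S.nx i)) (Fin (S.nx i)) ℝ)
    (z : ∀ i : Fin S.M, S.StateTraj i)
    (hfeas : S.feasPS ℓ K G g Y z Γ) :
    S.feasAT ℓ K G g Y z (fun i t ξ ζ => Γ i t ξ (fun j => S.Lmap Y z j (ζ j))) ∧
    S.objL (fun i t ξ ζ => Γ i t ξ (fun j => S.Lmap Y z j (ζ j)))
        (fun i => S.XAT ℓ K G g Y z i)
      = S.objPS ℓ K G g Y z Γ :=
  auxUncertainty_to_affineRestriction_general S ℓ K G g Γ Y z hfeas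
end

section
/- Let K ⊆ ℝ^m be a convex cone, G ∈ ℝ^{m×n}, g ∈ ℝ^m, and suppose that S = {s ∈ ℝ^n : g − G s ∈ K} is nonempty and bounded. For a scalar y ≥ 0 and z ∈ ℝ^n define X(y,z) = {x ∈ ℝ^n : ∃ s ∈ S, x = y·s + z} and X̂(y,z) = {x ∈ ℝ^n : ∃ ν ∈ ℝ^n, x = ν + z and y·g − G ν ∈ K}. Then X(y,z) = X̂(y,z) for every y ≥ 0 and z ∈ ℝ^n; equivalently, the sets {(x,y,z) : y ≥ 0, x ∈ X(y,z)} and {(x,y,z) : y ≥ 0, x ∈ X̂(y,z)} coincide. -/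
/-!
For `y > 0` the substitution `ν = y • s` identifies the two sets, because `K` is invariant under
multiplication by `y` and by `y⁻¹`. For `y = 0` the set `X̂(0, z) - z` is the recession cone
`{ν | -G ν ∈ K}` of `S`: every such `ν` gives a ray `s₀ + t • ν` inside `S`, so boundedness
of `S` forces `ν = 0`, and `X̂(0, z) = {z} = X(0, z)`.
-/

open Bornology Pointwise

namespace PointedCone

variable {R E : Type*} [Semiring R] [PartialOrder R] [IsOrderedRing R] [AddCommMonoid E]
  [Module R E]

def ofSet (K : Set E) (hK : K.Nonempty) (hadd : ∀ a ∈ K, ∀ b ∈ K, a + b ∈ K)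
    (hsmul : ∀ c : R, 0 ≤ c → ∀ a ∈ K, c • a ∈ K) : PointedCone R E where
  carrier := K
  add_mem' ha hb := hadd _ ha _ hb
  zero_mem' := by
    obtain ⟨a, ha⟩ := hK
    simpa using hsmul 0 le_rfl a ha
  smul_mem' c _ ha := hsmul c c.2 _ ha

end PointedCone

theorem eq_zero_of_isBounded_ray {E : Type*} [NormedAddCommGroup E] [NormedSpace ℝ E]
    {B : Set E} (hB : IsBounded B) {s ν : E} (hray : ∀ t : ℝ, 0 ≤ t → s + t • ν ∈ B) :
    ν = 0 := by
  by_contra hν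
  obtain ⟨C, hC⟩ := hB.exists_norm_le
  have hνpos : 0 < ‖ν‖ := norm_pos_iff.mpr hν
  set t := (C + ‖s‖ + 1) / ‖ν‖
  have ht : 0 ≤ t := div_nonneg (by linarith [hC s (by simpa using hray 0 le_rfl), norm_nonneg s])
    hνpos.le
  have hnorm : ‖t • ν‖ = C + ‖s‖ + 1 := by
    rw [norm_smul, Real.norm_of_nonneg ht, div_mul_cancel₀ _ hνpos.ne']
  have htri : ‖t • ν‖ ≤ ‖s + t • ν‖ + ‖s‖ := by
    simpa using norm_sub_le (s + t • ν) s
  linarith [hC _ (hray t ht)]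

section FeasibleSet

variable {E F : Type*} [AddCommGroup F] [Module ℝ F] (C : PointedCone ℝ F) (g : F)

section Algebraic

variable [AddCommGroup E] [Module ℝ E] (L : E →ₗ[ℝ] F)

theorem smul_setOf_sub_mem_of_pos {y : ℝ} (hy : 0 < y) :
    y • {s | g - L s ∈ C} = {ν | y • g - L ν ∈ C} := by
  ext ν
  rw [Set.mem_smul_set_iff_inv_smul_mem₀ hy.ne', Set.mem_ofPred_eq, Set.mem_ofPred_eq,
    ← C.smul_mem_iff hy, map_smul, smul_sub, smul_inv_smul₀ hy.ne']

theorem add_smul_mem_setOf_sub_mem {s ν : E} (hs : g - L s ∈ C) (hν : -L ν ∈ C) {t : ℝ}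
    (ht : 0 ≤ t) : s + t • ν ∈ {s | g - L s ∈ C} := by
  have hsum : g - L (s + t • ν) = (g - L s) + t • -L ν := by
    rw [map_add, map_smul]
    module
  rw [Set.mem_ofPred_eq, hsum]
  exact C.add_mem hs (C.smul_mem ht hν)

end Algebraic

variable [NormedAddCommGroup E] [NormedSpace ℝ E] (L : E →ₗ[ℝ] F)

theorem eq_zero_of_neg_map_mem (hbdd : IsBounded {s | g - L s ∈ C}) {s ν : E}
    (hs : g - L s ∈ C) (hν : -L ν ∈ C) : ν = 0 :=
  eq_zero_of_isBounded_ray hbdd fun _ ht => add_smul_mem_setOf_sub_mem C g L hs hν ht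

theorem smul_setOf_sub_mem (hne : {s | g - L s ∈ C}.Nonempty)
    (hbdd : IsBounded {s | g - L s ∈ C}) {y : ℝ} (hy : 0 ≤ y) :
    y • {s | g - L s ∈ C} = {ν | y • g - L ν ∈ C} := by
  rcases hy.eq_or_lt with rfl | hpos
  · obtain ⟨s₀, hs₀⟩ := hne
    rw [Set.zero_smul_set ⟨s₀, hs₀⟩]
    ext ν
    simp only [Set.mem_zero, Set.mem_ofPred_eq, zero_smul, zero_sub]
    constructor
    · rintro rfl
      simp
    · exact eq_zero_of_neg_map_mem C g L hbdd hs₀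
  · exact smul_setOf_sub_mem_of_pos C g L hpos

end FeasibleSet

/-- Let `K ⊆ ℝ^m` be a convex cone (closed under addition and
multiplication by nonnegative scalars), `G ∈ ℝ^{m×n}`, `g ∈ ℝ^m`, and suppose
`S = {s : g − G s ∈ K}` is nonempty and bounded. For `y ≥ 0` and `z ∈ ℝ^n`, the set
`X(y,z) = {y·s + z : s ∈ S}` coincides with
`X̂(y,z) = {ν + z : y·g − G ν ∈ K}`. -/
theorem scaled_set_reformulation {m n : ℕ} (K : Set (Fin m → ℝ))
    (hKadd : ∀ a ∈ K, ∀ b ∈ K, a + b ∈ K)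
    (hKsmul : ∀ c : ℝ, 0 ≤ c → ∀ a ∈ K, c • a ∈ K)
    (G : Matrix (Fin m) (Fin n) ℝ) (g : Fin m → ℝ)
    (hne : {s : Fin n → ℝ | g - G.mulVec s ∈ K}.Nonempty)
    (hbdd : Bornology.IsBounded {s : Fin n → ℝ | g - G.mulVec s ∈ K}) :
    ∀ y : ℝ, 0 ≤ y → ∀ z : Fin n → ℝ,
      {x : Fin n → ℝ | ∃ s, g - G.mulVec s ∈ K ∧ x = y • s + z}
        = {x : Fin n → ℝ | ∃ ν : Fin n → ℝ, x = ν + z ∧ y • g - G.mulVec ν ∈ K} := by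
  intro y hy z
  have hKne : K.Nonempty := let ⟨s, hs⟩ := hne; ⟨_, hs⟩
  have hscaled : y • {s | g - G.mulVec s ∈ K} = {ν | y • g - G.mulVec ν ∈ K} :=
    smul_setOf_sub_mem (PointedCone.ofSet K hKne hKadd hKsmul) g G.mulVecLin hne hbdd hy
  ext x
  constructor
  · rintro ⟨s, hs, rfl⟩
    have hys : y • s ∈ {ν | y • g - G.mulVec ν ∈ K} := hscaled ▸ Set.smul_mem_smul_set hs
    exact ⟨y • s, rfl, hys⟩
  · rintro ⟨ν, rfl, hν⟩
    obtain ⟨s, hs, rfl⟩ : ν ∈ y • {s | g - G.mulVec s ∈ K} := hscaled ▸ hν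
    exact ⟨s, hs, rfl⟩
end
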